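/- arXiv:2603.29675 — 6 statements merged into one kernel-verified Lean document; each statement's English description precedes it below -/
import Mathlib

section
/- Let L be a real n×n matrix with L1 = Lᵀ1 = 0 and ker(L) = span(1). Then for any γ ≠ 0, the matrix L + (γ/n)·11ᵀ is invertible and L† = (L + (γ/n)·11ᵀ)^{−1} − (1/(nγ))·11ᵀ. -/
open Matrix Classical

/-- The Moore–Penrose pseudoinverse of a real matrix, defined via its four
characterizing Penrose equations (which have a unique solution). -/
noncomputable def pinv {m k : Type*} [Fintype m] [Fintype k]
    (A : Matrix m k ℝ) : Matrix k m ℝ :=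
  if h : ∃ X : Matrix k m ℝ,
      A * X * A = A ∧ X * A * X = X ∧ (A * X)ᵀ = A * X ∧ (X * A)ᵀ = X * A
  then h.choose else 0

lemma penrose_unique {m k : Type*} [Fintype m] [Fintype k]
    (A : Matrix m k ℝ) (X Y : Matrix k m ℝ)
    (hX : A * X * A = A ∧ X * A * X = X ∧ (A * X)ᵀ = A * X ∧ (X * A)ᵀ = X * A)
    (hY : A * Y * A = A ∧ Y * A * Y = Y ∧ (A * Y)ᵀ = A * Y ∧ (Y * A)ᵀ = Y * A) :
    X = Y := by
  obtain ⟨hX1, hX2, hX3, hX4⟩ := hX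
  obtain ⟨hY1, hY2, hY3, hY4⟩ := hY
  have hAX : A * X = A * Y := by
    have t3 : (A * X) * (A * Y) = A * Y := by rw [← Matrix.mul_assoc, hX1]
    calc A * X = (A * Y) * (A * X) := by
          conv_lhs => rw [← hY1]
          simp only [Matrix.mul_assoc]
    _ = ((A * X) * (A * Y))ᵀ := by rw [Matrix.transpose_mul, hX3, hY3]
    _ = (A * Y)ᵀ := by rw [t3]
    _ = A * Y := hY3
  have hXA : X * A = Y * A := by
    have t3 : (Y * A) * (X * A) = Y * A := by
      rw [Matrix.mul_assoc, ← Matrix.mul_assoc A X A, hX1]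
    calc X * A = (X * A) * (Y * A) := by
          conv_lhs => rw [← hY1]
          simp only [Matrix.mul_assoc]
    _ = ((Y * A) * (X * A))ᵀ := by rw [Matrix.transpose_mul, hX4, hY4]
    _ = (Y * A)ᵀ := by rw [t3]
    _ = Y * A := hY4
  calc X = X * A * X := hX2.symm
  _ = (Y * A) * X := by rw [hXA]
  _ = Y * (A * Y) := by rw [Matrix.mul_assoc, hAX]
  _ = Y := by rw [← Matrix.mul_assoc, hY2]

lemma pinv_eq_of_penrose {m k : Type*} [Fintype m] [Fintype k]
    (A : Matrix m k ℝ) (X : Matrix k m ℝ)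
    (hX : A * X * A = A ∧ X * A * X = X ∧ (A * X)ᵀ = A * X ∧ (X * A)ᵀ = X * A) :
    pinv A = X := by
  have h : ∃ X : Matrix k m ℝ,
      A * X * A = A ∧ X * A * X = X ∧ (A * X)ᵀ = A * X ∧ (X * A)ᵀ = X * A := ⟨X, hX⟩
  rw [pinv, dif_pos h]
  exact penrose_unique A h.choose X h.choose_spec hX

theorem pinv_eq_inv_of_rank_one_perturbation
    {n : ℕ} (hn : 0 < n) (L : Matrix (Fin n) (Fin n) ℝ)
    (hL1 : L.mulVec (fun _ => 1) = 0)
    (hLt1 : Lᵀ.mulVec (fun _ => 1) = 0)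
    (hker : ∀ v : Fin n → ℝ, L.mulVec v = 0 ↔ ∃ c : ℝ, v = fun _ => c)
    (γ : ℝ) (hγ : γ ≠ 0) :
    IsUnit (L + (γ / (n : ℝ)) • Matrix.of (fun _ _ : Fin n => (1 : ℝ))).det ∧
    pinv L = (L + (γ / (n : ℝ)) • Matrix.of (fun _ _ : Fin n => (1 : ℝ)))⁻¹
      - (1 / ((n : ℝ) * γ)) • Matrix.of (fun _ _ : Fin n => (1 : ℝ)) := by
  have hn0 : (n : ℝ) ≠ 0 := Nat.cast_ne_zero.mpr hn.ne'
  set J : Matrix (Fin n) (Fin n) ℝ := Matrix.of (fun _ _ : Fin n => (1 : ℝ)) with hJdef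
  set M : Matrix (Fin n) (Fin n) ℝ := L + (γ / (n : ℝ)) • J with hMdef
  -- basic facts
  have hrow : ∀ i, ∑ j, L i j = 0 := by
    intro i
    have := congrFun hL1 i
    simpa [Matrix.mulVec, dotProduct] using this
  have hcol : ∀ j, ∑ i, L i j = 0 := by
    intro j
    have := congrFun hLt1 j
    simpa [Matrix.mulVec, dotProduct, Matrix.transpose_apply] using this
  have hLJ : L * J = 0 := by
    ext i j
    simp [Matrix.mul_apply, hJdef, hrow i]
  have hJL : J * L = 0 := by
    ext i j
    simp [Matrix.mul_apply, hJdef, hcol j]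
  have hJJ : J * J = (n : ℝ) • J := by
    ext i j
    simp [Matrix.mul_apply, hJdef]
  have hJt : Jᵀ = J := by
    ext i j
    simp [hJdef]
  -- invertibility
  have hdet : M.det ≠ 0 := by
    intro h0
    obtain ⟨v, hv, hMv⟩ := (Matrix.exists_mulVec_eq_zero_iff).mpr h0
    apply hv
    have hJv : ∀ i, J.mulVec v i = ∑ j, v j := by
      intro i; simp [Matrix.mulVec, dotProduct, hJdef]
    have hMv' : ∀ i, L.mulVec v i + (γ / n) * (∑ j, v j) = 0 := by
      intro i
      have := congrFun hMv i
      simpa [hMdef, Matrix.add_mulVec, Matrix.smul_mulVec, hJv i] using this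
    have hsumL : ∑ i, L.mulVec v i = 0 := by
      have : ∑ i, L.mulVec v i = ∑ j, (∑ i, L i j) * v j := by
        simp only [Matrix.mulVec, dotProduct, Finset.sum_mul]
        rw [Finset.sum_comm]
      rw [this]
      simp [hcol]
    have hsum : (∑ j, v j) = 0 := by
      have h0' : ∑ i, (L.mulVec v i + (γ / n) * (∑ j, v j)) = 0 := by
        simp [hMv']
      rw [Finset.sum_add_distrib, hsumL, zero_add, Finset.sum_const] at h0'
      simp only [Finset.card_univ, Fintype.card_fin, nsmul_eq_mul] at h0'
      rcases mul_eq_zero.mp h0' with h | h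
      · exact absurd h hn0
      · rcases mul_eq_zero.mp h with h' | h'
        · exact absurd h' (div_ne_zero hγ hn0)
        · exact h'
    have hLv : L.mulVec v = 0 := by
      funext i
      have := hMv' i
      rw [hsum, mul_zero, add_zero] at this
      exact this
    obtain ⟨c, hc⟩ := (hker v).mp hLv
    have : (n : ℝ) * c = 0 := by
      have := hsum
      rw [hc] at this
      simpa [Finset.sum_const, Finset.card_univ] using this
    have hc0 : c = 0 := (mul_eq_zero.mp this).resolve_left hn0
    rw [hc, hc0]
    rfl
  have hM : IsUnit M.det := isUnit_iff_ne_zero.mpr hdet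
  have hMinv : M * M⁻¹ = 1 := Matrix.mul_nonsing_inv M hM
  have hinvM : M⁻¹ * M = 1 := Matrix.nonsing_inv_mul M hM
  -- key products
  have hMJ : M * J = γ • J := by
    rw [hMdef, Matrix.add_mul, Matrix.smul_mul, hLJ, hJJ, zero_add, smul_smul]
    congr 1
    field_simp
  have hJM : J * M = γ • J := by
    rw [hMdef, Matrix.mul_add, Matrix.mul_smul, hJL, hJJ, zero_add, smul_smul]
    congr 1
    field_simp
  have hinvJ : M⁻¹ * J = γ⁻¹ • J := by
    have h1 : J = γ • (M⁻¹ * J) := by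
      have : M⁻¹ * (M * J) = γ • (M⁻¹ * J) := by rw [hMJ, Matrix.mul_smul]
      rw [← Matrix.mul_assoc, hinvM, Matrix.one_mul] at this
      exact this
    calc M⁻¹ * J = γ⁻¹ • (γ • (M⁻¹ * J)) := by
          rw [smul_smul, inv_mul_cancel₀ hγ, one_smul]
    _ = γ⁻¹ • J := by rw [← h1]
  have hJinv : J * M⁻¹ = γ⁻¹ • J := by
    have h1 : J = γ • (J * M⁻¹) := by
      have : (J * M) * M⁻¹ = γ • (J * M⁻¹) := by rw [hJM, Matrix.smul_mul]
      rw [Matrix.mul_assoc, hMinv, Matrix.mul_one] at this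
      exact this
    calc J * M⁻¹ = γ⁻¹ • (γ • (J * M⁻¹)) := by
          rw [smul_smul, inv_mul_cancel₀ hγ, one_smul]
    _ = γ⁻¹ • J := by rw [← h1]
  set X : Matrix (Fin n) (Fin n) ℝ := M⁻¹ - (1 / ((n : ℝ) * γ)) • J with hXdef
  have hscal : (1 / ((n : ℝ) * γ)) * (n : ℝ) = γ⁻¹ := by field_simp
  have hscal2 : (1 / ((n : ℝ) * γ)) * γ = (n : ℝ)⁻¹ := by
    rw [one_div, mul_inv, mul_assoc, inv_mul_cancel₀ hγ, mul_one]
  have hXJ : X * J = 0 := by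
    rw [hXdef, Matrix.sub_mul, hinvJ, Matrix.smul_mul, hJJ, smul_smul, hscal, sub_self]
  have hJX : J * X = 0 := by
    rw [hXdef, Matrix.mul_sub, hJinv, Matrix.mul_smul, hJJ, smul_smul, hscal, sub_self]
  have hMX : M * X = 1 - (n : ℝ)⁻¹ • J := by
    rw [hXdef, Matrix.mul_sub, hMinv, Matrix.mul_smul, hMJ, smul_smul, hscal2]
  have hXM : X * M = 1 - (n : ℝ)⁻¹ • J := by
    rw [hXdef, Matrix.sub_mul, hinvM, Matrix.smul_mul, hJM, smul_smul, hscal2]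
  have hLM : L = M - (γ / (n : ℝ)) • J := by
    rw [hMdef]; abel
  have hLX : L * X = 1 - (n : ℝ)⁻¹ • J := by
    have h1 : L * X = M * X - (γ / (n : ℝ)) • (J * X) := by
      rw [hLM, Matrix.sub_mul, Matrix.smul_mul]
    rw [h1, hJX, smul_zero, sub_zero, hMX]
  have hXL : X * L = 1 - (n : ℝ)⁻¹ • J := by
    have h1 : X * L = X * M - (γ / (n : ℝ)) • (X * J) := by
      rw [hLM, Matrix.mul_sub, Matrix.mul_smul]
    rw [h1, hXJ, smul_zero, sub_zero, hXM]
  have hP1 : L * X * L = L := by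
    rw [hLX, Matrix.sub_mul, Matrix.one_mul, Matrix.smul_mul, hJL, smul_zero, sub_zero]
  have hP2 : X * L * X = X := by
    rw [hXL, Matrix.sub_mul, Matrix.one_mul, Matrix.smul_mul, hJX, smul_zero, sub_zero]
  have hP3 : (L * X)ᵀ = L * X := by
    rw [hLX, Matrix.transpose_sub, Matrix.transpose_one, Matrix.transpose_smul, hJt]
  have hP4 : (X * L)ᵀ = X * L := by
    rw [hXL, Matrix.transpose_sub, Matrix.transpose_one, Matrix.transpose_smul, hJt]
  exact ⟨hM, pinv_eq_of_penrose L X ⟨hP1, hP2, hP3, hP4⟩⟩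
end

section
/- Let Q be a real symmetric positive semidefinite n×n matrix with ker(Q) = span(1), n ≥ 2. Define ζ := diagvec(Q†) and the resistance matrix Ω := 1ζᵀ + ζ1ᵀ − 2Q†. Then Ω is invertible and has exactly one positive eigenvalue and n−1 negative eigenvalues. -/
/-
Let K be the orthogonal projection onto the constant vectors. Since ker Q = span 1, the matrix
B = Q + K is positive definite, and B⁻¹ - K satisfies the four Penrose equations, so Q† = B⁻¹ - K.
Hence Q† is symmetric and positive definite on the hyperplane 1ᗮ, while the two rank-one parts of
Ω vanish there: Ω is negative definite on 1ᗮ. Two eigenvectors of Ω with nonnegative eigenvalues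
would span a plane meeting 1ᗮ, so Ω has at most one nonnegative eigenvalue. Its diagonal is zero,
so its eigenvalues sum to zero: exactly one is positive, the other n - 1 are negative, and none
vanishes, whence det Ω ≠ 0.
-/

open Matrix Classical

namespace Matrix

section Penrose

variable {m k : Type*} [Fintype m] [Fintype k]

theorem eq_of_penrose {R : Type*} [CommSemiring R] {A : Matrix m k R} {X Y : Matrix k m R}
    (h1X : A * X * A = A) (h2X : X * A * X = X) (h3X : (A * X)ᵀ = A * X)
    (h4X : (X * A)ᵀ = X * A) (h1Y : A * Y * A = A) (h2Y : Y * A * Y = Y)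
    (h3Y : (A * Y)ᵀ = A * Y) (h4Y : (Y * A)ᵀ = Y * A) :
    X = Y := by
  have hAX : A * X = A * Y :=
    calc A * X = (A * Y * (A * X))ᵀ := by rw [← Matrix.mul_assoc, h1Y, h3X]
      _ = A * X * (A * Y) := by rw [transpose_mul, h3X, h3Y]
      _ = A * Y := by rw [← Matrix.mul_assoc, h1X]
  have hXA : X * A = Y * A :=
    calc X * A = (X * A * (Y * A))ᵀ := by
          rw [Matrix.mul_assoc X, ← Matrix.mul_assoc A, h1Y, h4X]
      _ = Y * A * (X * A) := by rw [transpose_mul, h4X, h4Y]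
      _ = Y * A := by rw [Matrix.mul_assoc Y, ← Matrix.mul_assoc A, h1X]
  calc X = X * A * X := h2X.symm
    _ = Y * A * Y := by rw [hXA, Matrix.mul_assoc, hAX, ← Matrix.mul_assoc]
    _ = Y := h2Y

theorem pinv_eq_of_penrose {A : Matrix m k ℝ}
    {X : Matrix k m ℝ} (h1 : A * X * A = A) (h2 : X * A * X = X) (h3 : (A * X)ᵀ = A * X)
    (h4 : (X * A)ᵀ = X * A) : pinv A = X := by
  have hex : ∃ X : Matrix k m ℝ,
      A * X * A = A ∧ X * A * X = X ∧ (A * X)ᵀ = A * X ∧ (X * A)ᵀ = X * A :=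
    ⟨X, h1, h2, h3, h4⟩
  obtain ⟨c1, c2, c3, c4⟩ := hex.choose_spec
  rw [pinv, dif_pos hex]
  exact eq_of_penrose c1 c2 c3 c4 h1 h2 h3 h4

end Penrose

section Averaging

variable {ι : Type*} [Fintype ι]

variable (ι) in
noncomputable def averagingMatrix : Matrix ι ι ℝ := of fun _ _ => (Fintype.card ι : ℝ)⁻¹

theorem isSymm_averagingMatrix : (averagingMatrix ι).IsSymm := rfl

theorem averagingMatrix_mulVec (x : ι → ℝ) :
    averagingMatrix ι *ᵥ x = fun _ => (Fintype.card ι : ℝ)⁻¹ * ∑ i, x i := by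
  ext
  simp [averagingMatrix, mulVec, dotProduct, Finset.mul_sum]

theorem dotProduct_averagingMatrix_mulVec (x : ι → ℝ) :
    x ⬝ᵥ averagingMatrix ι *ᵥ x = (Fintype.card ι : ℝ)⁻¹ * (∑ i, x i) ^ 2 := by
  rw [averagingMatrix_mulVec, dotProduct, ← Finset.sum_mul]
  ring

theorem averagingMatrix_mul_self [Nonempty ι] :
    averagingMatrix ι * averagingMatrix ι = averagingMatrix ι := by
  ext
  simp [averagingMatrix, mul_apply]

theorem mul_averagingMatrix_eq_zero {Q : Matrix ι ι ℝ} (hQ : Q *ᵥ (fun _ => 1) = 0) :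
    Q * averagingMatrix ι = 0 := by
  ext i j
  have hrow : ∑ k, Q i k = 0 := by simpa [mulVec, dotProduct] using congrFun hQ i
  simp [averagingMatrix, mul_apply, ← Finset.sum_mul, hrow]

theorem averagingMatrix_mul_eq_zero {Q : Matrix ι ι ℝ} (hQs : Q.IsSymm)
    (hQ : Q *ᵥ (fun _ => 1) = 0) : averagingMatrix ι * Q = 0 := by
  rw [← hQs.eq, ← isSymm_averagingMatrix.eq, ← transpose_mul, mul_averagingMatrix_eq_zero hQ,
    transpose_zero]

end Averaging

section Pseudoinverse

variable {ι : Type*} [Fintype ι] [Nonempty ι] {Q : Matrix ι ι ℝ}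

theorem PosSemidef.posDef_add_averagingMatrix (hQ : Q.PosSemidef)
    (hker : ∀ v : ι → ℝ, Q *ᵥ v = 0 ↔ ∃ c : ℝ, v = fun _ => c) :
    (Q + averagingMatrix ι).PosDef := by
  have hK : (averagingMatrix ι).IsHermitian := isHermitian_iff_isSymm.mpr isSymm_averagingMatrix
  refine PosDef.of_dotProduct_mulVec_pos (hQ.1.add hK) fun x hx => ?_
  have hQx : 0 ≤ x ⬝ᵥ Q *ᵥ x := by simpa using hQ.dotProduct_mulVec_nonneg x
  rw [star_trivial, add_mulVec, dotProduct_add, dotProduct_averagingMatrix_mulVec]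
  by_cases hs : ∑ i, x i = 0
  · refine add_pos_of_pos_of_nonneg (hQx.lt_of_ne fun h0 => hx ?_) (by positivity)
    have hQx0 : Q *ᵥ x = 0 := (hQ.dotProduct_mulVec_zero_iff x).mp (by simpa using h0.symm)
    obtain ⟨c, rfl⟩ := (hker x).mp hQx0
    have hc : c = 0 := by simpa [Fintype.card_ne_zero] using hs
    ext
    simp [hc]
  · exact add_pos_of_nonneg_of_pos hQx (by positivity)

theorem PosSemidef.pinv_eq_inv_add_averagingMatrix_sub (hQ : Q.PosSemidef)
    (hker : ∀ v : ι → ℝ, Q *ᵥ v = 0 ↔ ∃ c : ℝ, v = fun _ => c) :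
    pinv Q = (Q + averagingMatrix ι)⁻¹ - averagingMatrix ι := by
  set K := averagingMatrix ι
  set B := Q + K
  have hB : IsUnit B.det := (hQ.posDef_add_averagingMatrix hker).det_pos.ne'.isUnit
  have hQs : Q.IsSymm := isHermitian_iff_isSymm.mp hQ.1
  have hQ1 : Q *ᵥ (fun _ => 1) = 0 := (hker _).mpr ⟨1, rfl⟩
  have hQK : Q * K = 0 := mul_averagingMatrix_eq_zero hQ1
  have hKQ : K * Q = 0 := averagingMatrix_mul_eq_zero hQs hQ1
  have hKK : K * K = K := averagingMatrix_mul_self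
  have hKBinv : K * B⁻¹ = K :=
    calc K * B⁻¹ = K * B * B⁻¹ := by rw [mul_add, hKQ, hKK, zero_add]
      _ = K := mul_nonsing_inv_cancel_right B K hB
  have hBinvK : B⁻¹ * K = K :=
    calc B⁻¹ * K = B⁻¹ * (B * K) := by rw [add_mul, hQK, hKK, zero_add]
      _ = K := nonsing_inv_mul_cancel_left B K hB
  have hQX : Q * (B⁻¹ - K) = 1 - K := by
    rw [mul_sub, hQK, sub_zero, show Q = B - K by simp [B], sub_mul, mul_nonsing_inv B hB,
      hKBinv]
  have hXQ : (B⁻¹ - K) * Q = 1 - K := by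
    rw [sub_mul, hKQ, sub_zero, show Q = B - K by simp [B], mul_sub, nonsing_inv_mul B hB,
      hBinvK]
  have hKX : K * (B⁻¹ - K) = 0 := by rw [mul_sub, hKBinv, hKK, sub_self]
  refine pinv_eq_of_penrose ?_ ?_ ?_ ?_
  · rw [hQX, sub_mul, one_mul, hKQ, sub_zero]
  · rw [hXQ, sub_mul, one_mul, hKX, sub_zero]
  · rw [hQX, transpose_sub, transpose_one, isSymm_averagingMatrix.eq]
  · rw [hXQ, transpose_sub, transpose_one, isSymm_averagingMatrix.eq]

theorem PosSemidef.isSymm_pinv (hQ : Q.PosSemidef)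
    (hker : ∀ v : ι → ℝ, Q *ᵥ v = 0 ↔ ∃ c : ℝ, v = fun _ => c) : (pinv Q).IsSymm := by
  rw [hQ.pinv_eq_inv_add_averagingMatrix_sub hker]
  exact (isHermitian_iff_isSymm.mp (hQ.posDef_add_averagingMatrix hker).1).inv.sub
    isSymm_averagingMatrix

theorem PosSemidef.dotProduct_pinv_mulVec_pos (hQ : Q.PosSemidef)
    (hker : ∀ v : ι → ℝ, Q *ᵥ v = 0 ↔ ∃ c : ℝ, v = fun _ => c) {x : ι → ℝ}
    (hx : ∑ i, x i = 0) (hx0 : x ≠ 0) : 0 < x ⬝ᵥ pinv Q *ᵥ x := by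
  have hBinv := (hQ.posDef_add_averagingMatrix hker).inv
  rw [hQ.pinv_eq_inv_add_averagingMatrix_sub hker, sub_mulVec, dotProduct_sub,
    dotProduct_averagingMatrix_mulVec, hx]
  simpa using hBinv.dotProduct_mulVec_pos hx0

end Pseudoinverse

section Resistance

variable {ι : Type*}

noncomputable def resistanceMatrix (P : Matrix ι ι ℝ) : Matrix ι ι ℝ :=
  of (fun _ j => P j j) + of (fun i _ => P i i) - 2 • P

theorem trace_resistanceMatrix [Fintype ι] (P : Matrix ι ι ℝ) :
    (resistanceMatrix P).trace = 0 := by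
  refine Finset.sum_eq_zero fun i _ => ?_
  simp only [resistanceMatrix, diag, sub_apply, add_apply, of_apply, two_nsmul]
  ring

theorem IsSymm.resistanceMatrix {P : Matrix ι ι ℝ} (hP : P.IsSymm) :
    (resistanceMatrix P).IsSymm := by
  refine IsSymm.ext fun i j => ?_
  simp only [Matrix.resistanceMatrix, sub_apply, add_apply, of_apply, two_nsmul, hP.apply]
  ring

theorem dotProduct_resistanceMatrix_mulVec [Fintype ι] (P : Matrix ι ι ℝ) {x : ι → ℝ}
    (hx : ∑ i, x i = 0) :
    x ⬝ᵥ resistanceMatrix P *ᵥ x = -(2 * (x ⬝ᵥ P *ᵥ x)) := by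
  have hconstRows : ∀ v : ι → ℝ, x ⬝ᵥ (of fun i _ => v i) *ᵥ x = 0 := fun v => by
    simp [dotProduct, mulVec, ← Finset.mul_sum, hx]
  have hconstCols : ∀ v : ι → ℝ, x ⬝ᵥ (of fun _ j => v j) *ᵥ x = 0 := fun v => by
    simp [dotProduct, mulVec, ← Finset.sum_mul, hx]
  simp only [resistanceMatrix, sub_mulVec, add_mulVec, dotProduct_sub, dotProduct_add,
    hconstRows, hconstCols, two_nsmul]
  ring

end Resistance

section Spectral

variable {ι : Type*} [Fintype ι] [DecidableEq ι] {A : Matrix ι ι ℝ}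

theorem IsHermitian.dotProduct_mulVec_eigenvectorUnitary_mulVec (hA : A.IsHermitian)
    (y : ι → ℝ) :
    (hA.eigenvectorUnitary : Matrix ι ι ℝ) *ᵥ y ⬝ᵥ
        A *ᵥ ((hA.eigenvectorUnitary : Matrix ι ι ℝ) *ᵥ y) =
      ∑ i, hA.eigenvalues i * y i ^ 2 := by
  set U : Matrix ι ι ℝ := ↑hA.eigenvectorUnitary
  have hdiag : Uᵀ * A * U = diagonal hA.eigenvalues := by
    simpa [Function.comp_def, star_eq_conjTranspose] using
      hA.conjStarAlgAut_star_eigenvectorUnitary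
  calc U *ᵥ y ⬝ᵥ A *ᵥ (U *ᵥ y) = y ⬝ᵥ (Uᵀ * A * U) *ᵥ y := by
        rw [← mulVec_mulVec, ← mulVec_mulVec, dotProduct_mulVec y Uᵀ, vecMul_transpose]
    _ = ∑ i, hA.eigenvalues i * y i ^ 2 := by
        simp only [hdiag, mulVec_diagonal, dotProduct]
        exact Finset.sum_congr rfl fun i _ => by ring

open Finset in
theorem IsHermitian.card_nonneg_eigenvalues_le_one (hA : A.IsHermitian) (w : ι → ℝ)
    (hneg : ∀ x, w ⬝ᵥ x = 0 → x ≠ 0 → x ⬝ᵥ A *ᵥ x < 0) :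
    #{i | 0 ≤ hA.eigenvalues i} ≤ 1 := by
  refine card_le_one.mpr fun i hi j hj => by_contra fun hij => ?_
  simp only [mem_filter, mem_univ, true_and] at hi hj
  set U : Matrix ι ι ℝ := ↑hA.eigenvectorUnitary
  set u := w ᵥ* U
  -- `U *ᵥ y` below lies in the span of the eigenvectors for `i` and `j`, and `a, b` are chosen
  -- to put it in the hyperplane `w ⬝ᵥ x = 0` as well.
  obtain ⟨a, b, hab, hu⟩ : ∃ a b : ℝ, (a ≠ 0 ∨ b ≠ 0) ∧ u i * a + u j * b = 0 := by
    by_cases hui : u i = 0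
    · exact ⟨1, 0, by simp, by simp [hui]⟩
    · exact ⟨u j, -u i, Or.inr (neg_ne_zero.mpr hui), by ring⟩
  set y : ι → ℝ := Pi.single i a + Pi.single j b
  have hy : U *ᵥ y ≠ 0 := by
    intro h
    have hy0 : y = 0 := by
      simpa [mulVec_mulVec, U] using congrArg (star U *ᵥ ·) h
    rcases hab with ha | hb
    · exact ha (by simpa [y, Ne.symm hij] using congrFun hy0 i)
    · exact hb (by simpa [y, hij] using congrFun hy0 j)
  have hw : w ⬝ᵥ U *ᵥ y = 0 := by
    simpa [dotProduct_mulVec, y, dotProduct_add, dotProduct_single] using hu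
  have hpos := hneg _ hw hy
  rw [hA.dotProduct_mulVec_eigenvectorUnitary_mulVec] at hpos
  refine hpos.not_ge (sum_nonneg fun k _ => ?_)
  by_cases hk : k = i ∨ k = j
  · rcases hk with rfl | rfl <;> positivity
  · obtain ⟨hki, hkj⟩ := not_or.mp hk
    simp [y, hki, hkj]

end Spectral

end Matrix

open Finset in
theorem card_pos_eq_one_of_sum_eq_zero_of_card_nonneg_le_one {ι : Type*} [Fintype ι]
    {f : ι → ℝ} (hsum : ∑ i, f i = 0) (hle : #{i | 0 ≤ f i} ≤ 1)
    (hcard : 2 ≤ Fintype.card ι) :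
    #{i | 0 < f i} = 1 ∧ #{i | f i < 0} = Fintype.card ι - 1 ∧ ∀ i, f i ≠ 0 := by
  have hsplit : #{i | 0 ≤ f i} + #{i | f i < 0} = Fintype.card ι := by
    simpa only [not_le, card_univ] using card_filter_add_card_filter_not (s := univ) (0 ≤ f ·)
  obtain ⟨i₀, hi₀⟩ := card_pos.mp (show 0 < #{i | f i < 0} by omega)
  obtain ⟨p, hp⟩ : ∃ p, 0 < f p := by
    by_contra! hnonpos
    exact (sum_lt_sum (fun i _ => hnonpos i) ⟨i₀, mem_univ _, (mem_filter.mp hi₀).2⟩).ne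
      (by simp [hsum])
  have hnonneg_iff : ∀ i, 0 ≤ f i ↔ i = p := fun i =>
    ⟨fun hi => card_le_one.mp hle i (by simpa) p (by simpa using hp.le), fun h => h ▸ hp.le⟩
  have hpos : #{i | 0 < f i} = #{i | 0 ≤ f i} :=
    congrArg card <| filter_congr fun i _ => ⟨le_of_lt, fun hi => (hnonneg_iff i).mp hi ▸ hp⟩
  have hone : #{i | 0 ≤ f i} = 1 := card_eq_one.mpr ⟨p, by ext; simp [hnonneg_iff]⟩
  refine ⟨hpos.trans hone, by omega, fun i hi => ?_⟩
  exact hp.ne' ((hnonneg_iff i).mp hi.ge ▸ hi)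

theorem resistance_matrix_inertia
    {n : ℕ} (hn : 2 ≤ n) (Q : Matrix (Fin n) (Fin n) ℝ)
    (hQ : Q.PosSemidef)
    (hker : ∀ v : Fin n → ℝ, Q.mulVec v = 0 ↔ ∃ c : ℝ, v = fun _ => c)
    (ζ : Fin n → ℝ) (hζ : ζ = fun i => pinv Q i i)
    (Ω : Matrix (Fin n) (Fin n) ℝ)
    (hΩ : Ω = Matrix.of (fun _ j => ζ j) + Matrix.of (fun i _ => ζ i) - 2 • pinv Q) :
    IsUnit Ω.det ∧
    ∀ hH : Ω.IsHermitian,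
      (Finset.univ.filter fun i => 0 < hH.eigenvalues i).card = 1 ∧
      (Finset.univ.filter fun i => hH.eigenvalues i < 0).card = n - 1 := by
  have : NeZero n := ⟨by omega⟩
  obtain rfl : Ω = resistanceMatrix (pinv Q) := by subst hζ hΩ; rfl
  have hsymm : (resistanceMatrix (pinv Q)).IsHermitian :=
    isHermitian_iff_isSymm.mpr (hQ.isSymm_pinv hker).resistanceMatrix
  have hle := hsymm.card_nonneg_eigenvalues_le_one 1 fun x hx hx0 => by
    rw [one_dotProduct] at hx
    linarith [dotProduct_resistanceMatrix_mulVec (pinv Q) hx,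
      hQ.dotProduct_pinv_mulVec_pos hker hx hx0]
  have hsum : ∑ i, hsymm.eigenvalues i = 0 := by
    simpa [trace_resistanceMatrix] using hsymm.trace_eq_sum_eigenvalues.symm
  obtain ⟨hpos, hneg, hne⟩ :=
    card_pos_eq_one_of_sum_eq_zero_of_card_nonneg_le_one hsum hle (by simpa using hn)
  refine ⟨?_, fun _ => ⟨hpos, by simpa using hneg⟩⟩
  rw [hsymm.det_eq_prod_eigenvalues]
  simpa [Finset.prod_ne_zero_iff] using hne
end

section
/- (Commutativity of Kron reduction and the undirecting map) Let L be the Laplacian of a strongly connected weight-balanced directed graph on n nodes, and let α ⊂ [n] with |α| ≥ 2 be such that both Schur complements below exist. Then taking the pseudoinverse of the symmetrized pseudoinverse commutes with Kron reduction: (L†_s)† / α^c = ((L / α^c)†_s)†, where A/α^c := A[α,α] − A[α,α^c] A[α^c,α^c]^{−1} A[α^c,α]. -/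
open Matrix Classical

/-- Submatrix of `A` with rows indexed by `α` and columns by `β`. -/
def subm {n : ℕ} (A : Matrix (Fin n) (Fin n) ℝ) (α β : Finset (Fin n)) :
    Matrix {i // i ∈ α} {j // j ∈ β} ℝ :=
  Matrix.of fun i j => A i.1 j.1

/-- Kron reduction (Schur complement) of `A` onto the node set `α`. -/
noncomputable def schur {n : ℕ} (A : Matrix (Fin n) (Fin n) ℝ) (α : Finset (Fin n)) :
    Matrix {i // i ∈ α} {i // i ∈ α} ℝ :=
  subm A α α - subm A α αᶜ * (subm A αᶜ αᶜ)⁻¹ * subm A αᶜ α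

/-- The "undirecting" map: pseudoinverse of the symmetrized pseudoinverse. -/
noncomputable def undir {m : Type*} [Fintype m] (M : Matrix m m ℝ) : Matrix m m ℝ :=
  pinv ((1 / 2 : ℝ) • (pinv M + (pinv M)ᵀ))

namespace KronAux


/-- all-ones matrix -/
def Jm (k l : Type*) : Matrix k l ℝ := Matrix.of fun _ _ => 1

lemma Jm_transpose (k l : Type*) : (Jm k l)ᵀ = Jm l k := rfl

lemma Jm_mul_Jm (k l m : Type*) [Fintype l] :
    Jm k l * Jm l m = (Fintype.card l : ℝ) • Jm k m := by
  ext i j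
  simp [Jm, Matrix.mul_apply, Finset.card_univ]

lemma penrose_unique {k : Type*} [Fintype k] {A X Y : Matrix k k ℝ}
    (hX1 : A * X * A = A) (hX2 : X * A * X = X)
    (hX3 : (A * X)ᵀ = A * X) (hX4 : (X * A)ᵀ = X * A)
    (hY1 : A * Y * A = A) (hY2 : Y * A * Y = Y)
    (hY3 : (A * Y)ᵀ = A * Y) (hY4 : (Y * A)ᵀ = Y * A) : X = Y := by
  have hAX : A * X = A * Y := by
    calc A * X = (A * X)ᵀ := hX3.symm
      _ = Xᵀ * Aᵀ := Matrix.transpose_mul _ _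
      _ = Xᵀ * (A * Y * A)ᵀ := by rw [hY1]
      _ = Xᵀ * (Aᵀ * (Yᵀ * Aᵀ)) := by rw [Matrix.transpose_mul, Matrix.transpose_mul]
      _ = (Xᵀ * Aᵀ) * (Yᵀ * Aᵀ) := by rw [mul_assoc]
      _ = (A * X)ᵀ * (A * Y)ᵀ := by rw [← Matrix.transpose_mul A X, ← Matrix.transpose_mul A Y]
      _ = (A * X) * (A * Y) := by rw [hX3, hY3]
      _ = (A * X * A) * Y := by rw [← mul_assoc]
      _ = A * Y := by rw [hX1]
  have hXA : X * A = Y * A := by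
    calc X * A = (X * A)ᵀ := hX4.symm
      _ = Aᵀ * Xᵀ := Matrix.transpose_mul _ _
      _ = (A * Y * A)ᵀ * Xᵀ := by rw [hY1]
      _ = (Aᵀ * (Yᵀ * Aᵀ)) * Xᵀ := by rw [Matrix.transpose_mul, Matrix.transpose_mul]
      _ = (Aᵀ * Yᵀ) * (Aᵀ * Xᵀ) := by rw [mul_assoc, mul_assoc, mul_assoc]
      _ = (Y * A)ᵀ * (X * A)ᵀ := by rw [← Matrix.transpose_mul Y A, ← Matrix.transpose_mul X A]
      _ = (Y * A) * (X * A) := by rw [hX4, hY4]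
      _ = Y * (A * X * A) := by rw [mul_assoc, ← mul_assoc A X A]
      _ = Y * A := by rw [hX1]
  calc X = X * A * X := hX2.symm
    _ = (Y * A) * X := by rw [hXA]
    _ = Y * (A * X) := mul_assoc _ _ _
    _ = Y * (A * Y) := by rw [hAX]
    _ = Y * A * Y := (mul_assoc _ _ _).symm
    _ = Y := hY2

lemma pinv_eq_of {k : Type*} [Fintype k] [DecidableEq k] {A X : Matrix k k ℝ} {c : ℝ}
    (hAX : A * X = 1 - c • Jm k k) (hXA : X * A = 1 - c • Jm k k)
    (hJA : Jm k k * A = 0) (hJX : Jm k k * X = 0) : pinv A = X := by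
  have h1 : A * X * A = A := by
    rw [hAX, sub_mul, one_mul, smul_mul_assoc, hJA, smul_zero, sub_zero]
  have h2 : X * A * X = X := by
    rw [hXA, sub_mul, one_mul, smul_mul_assoc, hJX, smul_zero, sub_zero]
  have h3 : (A * X)ᵀ = A * X := by
    rw [hAX, Matrix.transpose_sub, Matrix.transpose_one, Matrix.transpose_smul, Jm_transpose]
  have h4 : (X * A)ᵀ = X * A := by
    rw [hXA, Matrix.transpose_sub, Matrix.transpose_one, Matrix.transpose_smul, Jm_transpose]
  have hex : ∃ Y : Matrix k k ℝ,
      A * Y * A = A ∧ Y * A * Y = Y ∧ (A * Y)ᵀ = A * Y ∧ (Y * A)ᵀ = Y * A :=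
    ⟨X, h1, h2, h3, h4⟩
  unfold pinv
  rw [dif_pos hex]
  obtain ⟨g1, g2, g3, g4⟩ := hex.choose_spec
  exact penrose_unique g1 g2 g3 g4 h1 h2 h3 h4

variable {n : ℕ}

noncomputable def Mreg (A : Matrix (Fin n) (Fin n) ℝ) : Matrix (Fin n) (Fin n) ℝ :=
  A + ((n : ℝ))⁻¹ • Jm (Fin n) (Fin n)

noncomputable def Xstd (A : Matrix (Fin n) (Fin n) ℝ) : Matrix (Fin n) (Fin n) ℝ :=
  (Mreg A)⁻¹ - ((n : ℝ))⁻¹ • Jm (Fin n) (Fin n)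

lemma J_mulVec_const (c₀ : ℝ) :
    (Jm (Fin n) (Fin n)).mulVec (fun _ => c₀) = fun _ => (n : ℝ) * c₀ := by
  funext i
  simp [Jm, Matrix.mulVec, dotProduct, Finset.card_univ]

lemma isUnit_Mreg (hn : ((n : ℝ)) ≠ 0) (A : Matrix (Fin n) (Fin n) ℝ)
    (hJA : Jm (Fin n) (Fin n) * A = 0)
    (hkerA : ∀ v, A.mulVec v = 0 → ∃ c₀ : ℝ, v = fun _ => c₀) :
    IsUnit (Mreg A).det := by
  rw [isUnit_iff_ne_zero]
  intro hdet
  obtain ⟨v, hv0, hv⟩ := (Matrix.exists_mulVec_eq_zero_iff).2 hdet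
  apply hv0
  have hJM : Jm (Fin n) (Fin n) * Mreg A = Jm (Fin n) (Fin n) := by
    rw [Mreg, mul_add, hJA, zero_add, mul_smul_comm, Jm_mul_Jm, Fintype.card_fin,
      smul_smul, inv_mul_cancel₀ hn, one_smul]
  have hJv : (Jm (Fin n) (Fin n)).mulVec v = 0 := by
    calc (Jm (Fin n) (Fin n)).mulVec v = (Jm (Fin n) (Fin n) * Mreg A).mulVec v := by rw [hJM]
      _ = (Jm (Fin n) (Fin n)).mulVec ((Mreg A).mulVec v) := by rw [← Matrix.mulVec_mulVec]
      _ = 0 := by rw [hv, Matrix.mulVec_zero]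
  have hAv : A.mulVec v = 0 := by
    have h := hv
    rw [Mreg, Matrix.add_mulVec, Matrix.smul_mulVec, hJv, smul_zero, add_zero] at h
    exact h
  obtain ⟨c₀, rfl⟩ := hkerA v hAv
  have hc : (n : ℝ) * c₀ = 0 := by
    have := congrFun hJv ⟨0, Nat.pos_of_ne_zero (by exact_mod_cast fun h => hn (by simp [h]))⟩
    rwa [J_mulVec_const] at this
  have : c₀ = 0 := by
    rcases mul_eq_zero.1 hc with h | h
    · exact absurd h hn
    · exact h
  funext i; simp [this]

lemma Mreg_mul_J (hn : ((n : ℝ)) ≠ 0) (A : Matrix (Fin n) (Fin n) ℝ)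
    (hAJ : A * Jm (Fin n) (Fin n) = 0) :
    Mreg A * Jm (Fin n) (Fin n) = Jm (Fin n) (Fin n) := by
  rw [Mreg, add_mul, hAJ, zero_add, smul_mul_assoc, Jm_mul_Jm, Fintype.card_fin,
    smul_smul, inv_mul_cancel₀ hn, one_smul]

lemma J_mul_Mreg (hn : ((n : ℝ)) ≠ 0) (A : Matrix (Fin n) (Fin n) ℝ)
    (hJA : Jm (Fin n) (Fin n) * A = 0) :
    Jm (Fin n) (Fin n) * Mreg A = Jm (Fin n) (Fin n) := by
  rw [Mreg, mul_add, hJA, zero_add, mul_smul_comm, Jm_mul_Jm, Fintype.card_fin,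
    smul_smul, inv_mul_cancel₀ hn, one_smul]

lemma Xstd_facts (hn : ((n : ℝ)) ≠ 0) (A : Matrix (Fin n) (Fin n) ℝ)
    (hAJ : A * Jm (Fin n) (Fin n) = 0) (hJA : Jm (Fin n) (Fin n) * A = 0)
    (hU : IsUnit (Mreg A).det) :
    A * Xstd A = 1 - ((n : ℝ))⁻¹ • Jm (Fin n) (Fin n) ∧
    Xstd A * A = 1 - ((n : ℝ))⁻¹ • Jm (Fin n) (Fin n) ∧
    Xstd A * Jm (Fin n) (Fin n) = 0 ∧
    Jm (Fin n) (Fin n) * Xstd A = 0 := by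
  have hMi : Mreg A * (Mreg A)⁻¹ = 1 := Matrix.mul_nonsing_inv _ hU
  have hiM : (Mreg A)⁻¹ * Mreg A = 1 := Matrix.nonsing_inv_mul _ hU
  have hMiJ : (Mreg A)⁻¹ * Jm (Fin n) (Fin n) = Jm (Fin n) (Fin n) := by
    calc (Mreg A)⁻¹ * Jm (Fin n) (Fin n)
        = (Mreg A)⁻¹ * (Mreg A * Jm (Fin n) (Fin n)) := by rw [Mreg_mul_J hn A hAJ]
      _ = ((Mreg A)⁻¹ * Mreg A) * Jm (Fin n) (Fin n) := by rw [mul_assoc]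
      _ = Jm (Fin n) (Fin n) := by rw [hiM, one_mul]
  have hJMi : Jm (Fin n) (Fin n) * (Mreg A)⁻¹ = Jm (Fin n) (Fin n) := by
    calc Jm (Fin n) (Fin n) * (Mreg A)⁻¹
        = (Jm (Fin n) (Fin n) * Mreg A) * (Mreg A)⁻¹ := by rw [J_mul_Mreg hn A hJA]
      _ = Jm (Fin n) (Fin n) * (Mreg A * (Mreg A)⁻¹) := by rw [mul_assoc]
      _ = Jm (Fin n) (Fin n) := by rw [hMi, mul_one]
  have hAMi : A = Mreg A - ((n : ℝ))⁻¹ • Jm (Fin n) (Fin n) := by rw [Mreg]; abel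
  have key1 : A * (Mreg A)⁻¹ = 1 - ((n : ℝ))⁻¹ • Jm (Fin n) (Fin n) := by
    have e : Mreg A * (Mreg A)⁻¹
        = A * (Mreg A)⁻¹ + ((n : ℝ))⁻¹ • (Jm (Fin n) (Fin n) * (Mreg A)⁻¹) := by
      rw [Mreg, add_mul, smul_mul_assoc]
    rw [hMi, hJMi] at e
    exact eq_sub_of_add_eq e.symm
  have key2 : (Mreg A)⁻¹ * A = 1 - ((n : ℝ))⁻¹ • Jm (Fin n) (Fin n) := by
    have e : (Mreg A)⁻¹ * Mreg A
        = (Mreg A)⁻¹ * A + ((n : ℝ))⁻¹ • ((Mreg A)⁻¹ * Jm (Fin n) (Fin n)) := by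
      rw [Mreg, mul_add, mul_smul_comm]
    rw [hiM, hMiJ] at e
    exact eq_sub_of_add_eq e.symm
  refine ⟨?_, ?_, ?_, ?_⟩
  · rw [Xstd, mul_sub, mul_smul_comm, hAJ, smul_zero, sub_zero, key1]
  · rw [Xstd, sub_mul, smul_mul_assoc, hJA, smul_zero, sub_zero, key2]
  · rw [Xstd, sub_mul, hMiJ, smul_mul_assoc, Jm_mul_Jm, Fintype.card_fin,
      smul_smul, inv_mul_cancel₀ hn, one_smul, sub_self]
  · rw [Xstd, mul_sub, hJMi, mul_smul_comm, Jm_mul_Jm, Fintype.card_fin,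
      smul_smul, inv_mul_cancel₀ hn, one_smul, sub_self]

lemma mul_J_of (A : Matrix (Fin n) (Fin n) ℝ) (h : A.mulVec (fun _ => 1) = 0) :
    A * Jm (Fin n) (Fin n) = 0 := by
  ext i j
  have := congrFun h i
  simpa [Jm, Matrix.mul_apply, Matrix.mulVec, dotProduct] using this

lemma J_mul_of (A : Matrix (Fin n) (Fin n) ℝ) (h : Aᵀ.mulVec (fun _ => 1) = 0) :
    Jm (Fin n) (Fin n) * A = 0 := by
  ext i j
  have := congrFun h j
  simpa [Jm, Matrix.mul_apply, Matrix.mulVec, dotProduct, Matrix.transpose_apply]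
    using this

lemma quad_zero (L : Matrix (Fin n) (Fin n) ℝ)
    (hL1 : L.mulVec (fun _ => 1) = 0) (hLt1 : Lᵀ.mulVec (fun _ => 1) = 0)
    (hoff : ∀ i j : Fin n, i ≠ j → L i j ≤ 0)
    (w : Fin n → ℝ) (hq : w ⬝ᵥ L.mulVec w = 0) : L.mulVec w = 0 := by
  have hrow : ∀ i, ∑ j, L i j = 0 := by
    intro i
    have := congrFun hL1 i
    simpa [Matrix.mulVec, dotProduct] using this
  have hcol : ∀ j, ∑ i, L i j = 0 := by
    intro j
    have := congrFun hLt1 j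
    simpa [Matrix.mulVec, dotProduct, Matrix.transpose_apply] using this
  have hsum : ∑ i, ∑ j, (-(L i j)) * (w i - w j) ^ 2 = 0 := by
    have expand : ∀ i j : Fin n, (-(L i j)) * (w i - w j) ^ 2
        = 2 * (w i * (L i j * w j)) - L i j * w i ^ 2 - L i j * w j ^ 2 := by
      intro i j; ring
    calc ∑ i, ∑ j, (-(L i j)) * (w i - w j) ^ 2
        = ∑ i, ∑ j, (2 * (w i * (L i j * w j)) - L i j * w i ^ 2 - L i j * w j ^ 2) := by
          simp_rw [expand]
      _ = (∑ i, ∑ j, 2 * (w i * (L i j * w j))) - (∑ i, ∑ j, L i j * w i ^ 2)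
            - (∑ i, ∑ j, L i j * w j ^ 2) := by
          simp [Finset.sum_sub_distrib]
      _ = 0 := by
          have e1 : ∑ i, ∑ j, 2 * (w i * (L i j * w j)) = 2 * (w ⬝ᵥ L.mulVec w) := by
            have hdp : w ⬝ᵥ L.mulVec w = ∑ i, ∑ j, w i * (L i j * w j) := by
              simp [dotProduct, Matrix.mulVec, Finset.mul_sum]
            rw [hdp, Finset.mul_sum]
            exact Finset.sum_congr rfl fun i _ => (Finset.mul_sum _ _ _).symm
          have e2 : ∑ i, ∑ j, L i j * w i ^ 2 = 0 := by
            refine Finset.sum_eq_zero fun i _ => ?_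
            rw [← Finset.sum_mul, hrow, zero_mul]
          have e3 : ∑ i : Fin n, ∑ j : Fin n, L i j * w j ^ 2 = 0 := by
            rw [Finset.sum_comm]
            refine Finset.sum_eq_zero fun j _ => ?_
            rw [← Finset.sum_mul, hcol, zero_mul]
          rw [e1, e2, e3, hq]; ring
  have hterm : ∀ i j : Fin n, (-(L i j)) * (w i - w j) ^ 2 = 0 := by
    have hnn : ∀ p : Fin n × Fin n, 0 ≤ (-(L p.1 p.2)) * (w p.1 - w p.2) ^ 2 := by
      intro p
      rcases eq_or_ne p.1 p.2 with h | h
      · simp [h]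
      · exact mul_nonneg (neg_nonneg.2 (hoff p.1 p.2 h)) (sq_nonneg _)
    have hs : ∑ p : Fin n × Fin n, (-(L p.1 p.2)) * (w p.1 - w p.2) ^ 2 = 0 := by
      rw [Fintype.sum_prod_type]; exact hsum
    have h := (Finset.sum_eq_zero_iff_of_nonneg (fun p _ => hnn p)).1 hs
    intro i j
    exact h (i, j) (Finset.mem_univ _)
  funext i
  have hconst : ∀ j, L i j * w j = L i j * w i := by
    intro j
    rcases eq_or_ne i j with rfl | h
    · rfl
    rcases mul_eq_zero.1 (hterm i j) with hL | hw
    · rw [neg_eq_zero.1 hL, zero_mul, zero_mul]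
    · rw [sub_eq_zero.1 ((pow_eq_zero_iff (by norm_num : (2:ℕ) ≠ 0)).1 hw)]
  calc (L.mulVec w) i = ∑ j, L i j * w j := by simp [Matrix.mulVec, dotProduct]
    _ = ∑ j, L i j * w i := Finset.sum_congr rfl fun j _ => hconst j
    _ = (∑ j, L i j) * w i := (Finset.sum_mul _ _ _).symm
    _ = 0 := by rw [hrow i, zero_mul]

lemma subm_mul_split (A B : Matrix (Fin n) (Fin n) ℝ) (β γ δ : Finset (Fin n)) :
    subm (A * B) β δ = subm A β γ * subm B γ δ + subm A β γᶜ * subm B γᶜ δ := by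
  ext i j
  simp only [subm, Matrix.add_apply, Matrix.mul_apply, Matrix.of_apply]
  calc ∑ k : Fin n, A i.1 k * B k j.1
      = (∑ k ∈ γ, A i.1 k * B k j.1) + ∑ k ∈ γᶜ, A i.1 k * B k j.1 :=
        (Finset.sum_add_sum_compl γ _).symm
    _ = _ := by
        rw [← Finset.sum_coe_sort γ (fun k => A i.1 k * B k j.1),
          ← Finset.sum_coe_sort γᶜ (fun k => A i.1 k * B k j.1)]

lemma subm_sub (A B : Matrix (Fin n) (Fin n) ℝ) (β γ : Finset (Fin n)) :
    subm (A - B) β γ = subm A β γ - subm B β γ := rfl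

lemma subm_add (A B : Matrix (Fin n) (Fin n) ℝ) (β γ : Finset (Fin n)) :
    subm (A + B) β γ = subm A β γ + subm B β γ := rfl

lemma subm_smul (c : ℝ) (A : Matrix (Fin n) (Fin n) ℝ) (β γ : Finset (Fin n)) :
    subm (c • A) β γ = c • subm A β γ := rfl

lemma subm_zero (β γ : Finset (Fin n)) : subm (0 : Matrix (Fin n) (Fin n) ℝ) β γ = 0 := rfl

lemma subm_J (β γ : Finset (Fin n)) :
    subm (Jm (Fin n) (Fin n)) β γ = Jm {i // i ∈ β} {j // j ∈ γ} := rfl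

lemma subm_transpose (A : Matrix (Fin n) (Fin n) ℝ) (β γ : Finset (Fin n)) :
    (subm A β γ)ᵀ = subm Aᵀ γ β := rfl

lemma subm_one_self (β : Finset (Fin n)) :
    subm (1 : Matrix (Fin n) (Fin n) ℝ) β β = 1 := by
  ext i j
  simp only [subm, Matrix.of_apply, Matrix.one_apply, Subtype.ext_iff]

lemma subm_one_compl_left (β : Finset (Fin n)) :
    subm (1 : Matrix (Fin n) (Fin n) ℝ) βᶜ β = 0 := by
  ext i j
  have : i.1 ≠ j.1 := fun h => (Finset.mem_compl.1 i.2) (h ▸ j.2)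
  simp [subm, Matrix.one_apply_ne this]

lemma subm_one_compl_right (β : Finset (Fin n)) :
    subm (1 : Matrix (Fin n) (Fin n) ℝ) β βᶜ = 0 := by
  ext i j
  have : i.1 ≠ j.1 := fun h => (Finset.mem_compl.1 j.2) (h ▸ i.2)
  simp [subm, Matrix.one_apply_ne this]

noncomputable def Pm {n : ℕ} (α : Finset (Fin n)) : Matrix {i // i ∈ α} {i // i ∈ α} ℝ :=
  1 - ((α.card : ℝ))⁻¹ • Jm {i // i ∈ α} {i // i ∈ α}

lemma Jm_mul_Pm (α : Finset (Fin n)) (hm : ((α.card : ℝ)) ≠ 0) (k : Type*) :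
    Jm k {i // i ∈ α} * Pm α = 0 := by
  rw [Pm, Matrix.mul_sub, Matrix.mul_one, Matrix.mul_smul, Jm_mul_Jm, Fintype.card_coe,
    smul_smul, inv_mul_cancel₀ hm, one_smul, sub_self]

lemma Pm_mul_Jm (α : Finset (Fin n)) (hm : ((α.card : ℝ)) ≠ 0) (k : Type*) :
    Pm α * Jm {i // i ∈ α} k = 0 := by
  rw [Pm, Matrix.sub_mul, Matrix.one_mul, Matrix.smul_mul, Jm_mul_Jm, Fintype.card_coe,
    smul_smul, inv_mul_cancel₀ hm, one_smul, sub_self]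

lemma Pm_transpose (α : Finset (Fin n)) : (Pm α)ᵀ = Pm α := by
  rw [Pm, Matrix.transpose_sub, Matrix.transpose_one, Matrix.transpose_smul, Jm_transpose]

lemma kron_facts (A X : Matrix (Fin n) (Fin n) ℝ) (α : Finset (Fin n))
    (hm : ((α.card : ℝ)) ≠ 0) (c : ℝ)
    (hAJ : A * Jm (Fin n) (Fin n) = 0) (hJA : Jm (Fin n) (Fin n) * A = 0)
    (hXJ : X * Jm (Fin n) (Fin n) = 0) (hJX : Jm (Fin n) (Fin n) * X = 0)
    (hAX : A * X = 1 - c • Jm (Fin n) (Fin n)) (hXA : X * A = 1 - c • Jm (Fin n) (Fin n))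
    (hB : IsUnit (subm A αᶜ αᶜ).det) :
    schur A α * (Pm α * subm X α α * Pm α) = Pm α ∧
    (Pm α * subm X α α * Pm α) * schur A α = Pm α ∧
    Jm {i // i ∈ α} {i // i ∈ α} * schur A α = 0 ∧
    Jm {i // i ∈ α} {i // i ∈ α} * (Pm α * subm X α α * Pm α) = 0 := by
  have hBi : (subm A αᶜ αᶜ)⁻¹ * subm A αᶜ αᶜ = 1 := Matrix.nonsing_inv_mul _ hB
  have hBi' : subm A αᶜ αᶜ * (subm A αᶜ αᶜ)⁻¹ = 1 := Matrix.mul_nonsing_inv _ hB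
  -- extract block equations
  have e1 : subm A α α * subm X α α + subm A α αᶜ * subm X αᶜ α
      = 1 - c • Jm {i // i ∈ α} {i // i ∈ α} := by
    have h := congrArg (fun Y : Matrix (Fin n) (Fin n) ℝ => subm Y α α) hAX
    rw [subm_mul_split A X α α α, subm_sub, subm_smul, subm_one_self, subm_J] at h
    exact h
  have e2 : subm A αᶜ α * subm X α α + subm A αᶜ αᶜ * subm X αᶜ α
      = -(c • Jm {i // i ∈ αᶜ} {i // i ∈ α}) := by
    have h := congrArg (fun Y : Matrix (Fin n) (Fin n) ℝ => subm Y αᶜ α) hAX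
    rw [subm_mul_split A X αᶜ α α, subm_sub, subm_smul, subm_one_compl_left, subm_J] at h
    rw [h]; abel
  have eA1 : subm A α α * Jm {i // i ∈ α} {i // i ∈ α}
      + subm A α αᶜ * Jm {i // i ∈ αᶜ} {i // i ∈ α} = 0 := by
    have h := congrArg (fun Y : Matrix (Fin n) (Fin n) ℝ => subm Y α α) hAJ
    rw [subm_mul_split A (Jm (Fin n) (Fin n)) α α α, subm_zero, subm_J, subm_J] at h
    exact h
  have eA2 : subm A αᶜ α * Jm {i // i ∈ α} {i // i ∈ α}
      + subm A αᶜ αᶜ * Jm {i // i ∈ αᶜ} {i // i ∈ α} = 0 := by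
    have h := congrArg (fun Y : Matrix (Fin n) (Fin n) ℝ => subm Y αᶜ α) hAJ
    rw [subm_mul_split A (Jm (Fin n) (Fin n)) αᶜ α α, subm_zero, subm_J, subm_J] at h
    exact h
  have eC1 : Jm {i // i ∈ α} {i // i ∈ α} * subm A α α
      + Jm {i // i ∈ α} {i // i ∈ αᶜ} * subm A αᶜ α = 0 := by
    have h := congrArg (fun Y : Matrix (Fin n) (Fin n) ℝ => subm Y α α) hJA
    rw [subm_mul_split (Jm (Fin n) (Fin n)) A α α α, subm_zero, subm_J, subm_J] at h
    exact h
  have eC2 : Jm {i // i ∈ α} {i // i ∈ α} * subm A α αᶜ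
      + Jm {i // i ∈ α} {i // i ∈ αᶜ} * subm A αᶜ αᶜ = 0 := by
    have h := congrArg (fun Y : Matrix (Fin n) (Fin n) ℝ => subm Y α αᶜ) hJA
    rw [subm_mul_split (Jm (Fin n) (Fin n)) A α α αᶜ, subm_zero, subm_J, subm_J] at h
    exact h
  have eX1 : subm X α α * subm A α α + subm X α αᶜ * subm A αᶜ α
      = 1 - c • Jm {i // i ∈ α} {i // i ∈ α} := by
    have h := congrArg (fun Y : Matrix (Fin n) (Fin n) ℝ => subm Y α α) hXA
    rw [subm_mul_split X A α α α, subm_sub, subm_smul, subm_one_self, subm_J] at h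
    exact h
  have eX2 : subm X α α * subm A α αᶜ + subm X α αᶜ * subm A αᶜ αᶜ
      = -(c • Jm {i // i ∈ α} {i // i ∈ αᶜ}) := by
    have h := congrArg (fun Y : Matrix (Fin n) (Fin n) ℝ => subm Y α αᶜ) hXA
    rw [subm_mul_split X A α α αᶜ, subm_sub, subm_smul, subm_one_compl_right, subm_J] at h
    rw [h]; abel
  -- shorthand
  set P := subm A α α with hP
  set Q := subm A α αᶜ with hQ
  set R := subm A αᶜ α with hR
  set Bm := subm A αᶜ αᶜ with hBm
  set X11 := subm X α α with hX11
  set X21 := subm X αᶜ α with hX21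
  set X12 := subm X α αᶜ with hX12
  set J11 := Jm {i // i ∈ α} {i // i ∈ α} with hJ11
  set J21 := Jm {i // i ∈ αᶜ} {i // i ∈ α} with hJ21
  set J12 := Jm {i // i ∈ α} {i // i ∈ αᶜ} with hJ12
  have hKdef : schur A α = P - Q * Bm⁻¹ * R := rfl
  -- key product identities
  have hKX : (P - Q * Bm⁻¹ * R) * X11 = (1 - c • J11) + c • (Q * Bm⁻¹ * J21) := by
    have hRX : R * X11 = -(c • J21) - Bm * X21 := eq_sub_of_add_eq e2
    rw [Matrix.sub_mul, Matrix.mul_assoc (Q * Bm⁻¹) R X11, hRX, Matrix.mul_sub,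
      Matrix.mul_neg, Matrix.mul_smul, Matrix.mul_assoc Q Bm⁻¹ (Bm * X21),
      Matrix.nonsing_inv_mul_cancel_left _ _ hB, ← e1]
    abel
  have hKJ : (P - Q * Bm⁻¹ * R) * J11 = 0 := by
    have t2 : R * J11 = -(Bm * J21) := (add_eq_zero_iff_eq_neg).1 eA2
    rw [Matrix.sub_mul, Matrix.mul_assoc (Q * Bm⁻¹) R J11, t2, Matrix.mul_neg,
      Matrix.mul_assoc Q Bm⁻¹ (Bm * J21), Matrix.nonsing_inv_mul_cancel_left _ _ hB,
      sub_neg_eq_add]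
    exact eA1
  have hJK : J11 * (P - Q * Bm⁻¹ * R) = 0 := by
    have t2 : J11 * Q = -(J12 * Bm) := (add_eq_zero_iff_eq_neg).1 eC2
    rw [Matrix.mul_sub, ← Matrix.mul_assoc J11 (Q * Bm⁻¹) R, ← Matrix.mul_assoc J11 Q Bm⁻¹,
      t2, Matrix.neg_mul, Matrix.neg_mul, Matrix.mul_nonsing_inv_cancel_right _ _ hB,
      sub_neg_eq_add]
    exact eC1
  have hXK : X11 * (P - Q * Bm⁻¹ * R) = (1 - c • J11) + c • (J12 * Bm⁻¹ * R) := by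
    have hXQ : X11 * Q = -(c • J12) - X12 * Bm := eq_sub_of_add_eq eX2
    rw [Matrix.mul_sub, ← Matrix.mul_assoc X11 (Q * Bm⁻¹) R, ← Matrix.mul_assoc X11 Q Bm⁻¹,
      hXQ, Matrix.sub_mul, Matrix.sub_mul, Matrix.neg_mul, Matrix.neg_mul,
      Matrix.smul_mul, Matrix.smul_mul, Matrix.mul_nonsing_inv_cancel_right _ _ hB, ← eX1]
    abel
  have hKJ2 : (P - Q * Bm⁻¹ * R) * J11 = 0 := hKJ
  have hKPm : (P - Q * Bm⁻¹ * R) * Pm α = P - Q * Bm⁻¹ * R := by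
    rw [Pm, Matrix.mul_sub, Matrix.mul_one, Matrix.mul_smul, ← hJ11, hKJ2, smul_zero, sub_zero]
  have hPmK : Pm α * (P - Q * Bm⁻¹ * R) = P - Q * Bm⁻¹ * R := by
    rw [Pm, Matrix.sub_mul, Matrix.one_mul, Matrix.smul_mul, ← hJ11, hJK, smul_zero, sub_zero]
  refine ⟨?_, ?_, ?_, ?_⟩
  · rw [hKdef]
    calc (P - Q * Bm⁻¹ * R) * (Pm α * X11 * Pm α)
        = (((P - Q * Bm⁻¹ * R) * Pm α) * X11) * Pm α := by
          rw [Matrix.mul_assoc (Pm α) X11 (Pm α),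
            ← Matrix.mul_assoc (P - Q * Bm⁻¹ * R) (Pm α) (X11 * Pm α),
            Matrix.mul_assoc ((P - Q * Bm⁻¹ * R) * Pm α) X11 (Pm α)]
      _ = ((P - Q * Bm⁻¹ * R) * X11) * Pm α := by rw [hKPm]
      _ = ((1 - c • J11) + c • (Q * Bm⁻¹ * J21)) * Pm α := by rw [hKX]
      _ = Pm α := by
          simp [Matrix.add_mul, Matrix.sub_mul, Matrix.smul_mul, Matrix.mul_assoc,
            Jm_mul_Pm α hm, hJ11, hJ21]
  · rw [hKdef]
    calc (Pm α * X11 * Pm α) * (P - Q * Bm⁻¹ * R)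
        = (Pm α * X11) * (Pm α * (P - Q * Bm⁻¹ * R)) := by
          rw [Matrix.mul_assoc (Pm α * X11) (Pm α) (P - Q * Bm⁻¹ * R)]
      _ = Pm α * (X11 * (P - Q * Bm⁻¹ * R)) := by
          rw [hPmK, Matrix.mul_assoc (Pm α) X11 (P - Q * Bm⁻¹ * R)]
      _ = Pm α * ((1 - c • J11) + c • (J12 * Bm⁻¹ * R)) := by rw [hXK]
      _ = Pm α := by
          simp [Matrix.mul_add, Matrix.mul_sub, Matrix.mul_smul,
            Pm_mul_Jm α hm, hJ11, hJ12, ← Matrix.mul_assoc]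
  · rw [hKdef]; exact hJK
  · calc J11 * (Pm α * X11 * Pm α) = ((J11 * Pm α) * X11) * Pm α := by
          rw [← Matrix.mul_assoc J11 (Pm α * X11) (Pm α),
            ← Matrix.mul_assoc J11 (Pm α) X11]
      _ = 0 := by rw [hJ11, Jm_mul_Pm α hm, Matrix.zero_mul, Matrix.zero_mul]

end KronAux

open KronAux in
theorem kron_reduction_commutes_with_undirecting
    {n : ℕ} (L : Matrix (Fin n) (Fin n) ℝ)
    (hL1 : L.mulVec (fun _ => 1) = 0)
    (hLt1 : Lᵀ.mulVec (fun _ => 1) = 0)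
    (hker : ∀ v : Fin n → ℝ, L.mulVec v = 0 ↔ ∃ c : ℝ, v = fun _ => c)
    (hoff : ∀ i j : Fin n, i ≠ j → L i j ≤ 0)
    (α : Finset (Fin n)) (hα : 2 ≤ α.card)
    (h1 : IsUnit (subm L αᶜ αᶜ).det)
    (h2 : IsUnit (subm (undir L) αᶜ αᶜ).det) :
    schur (undir L) α = undir (schur L α) := by
  classical
  -- numerology
  have hn2 : 2 ≤ n := le_trans hα (le_trans (Finset.card_le_univ α) (by simp))
  have hn : ((n : ℝ)) ≠ 0 := Nat.cast_ne_zero.2 (by omega)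
  have hm : ((α.card : ℝ)) ≠ 0 := Nat.cast_ne_zero.2 (by omega)
  -- Laplacian matrix-level facts
  have hLJ : L * Jm (Fin n) (Fin n) = 0 := mul_J_of L hL1
  have hJL : Jm (Fin n) (Fin n) * L = 0 := J_mul_of L hLt1
  have hkerL : ∀ v, L.mulVec v = 0 → ∃ c₀ : ℝ, v = fun _ => c₀ := fun v hv => (hker v).1 hv
  have hML : IsUnit (Mreg L).det := isUnit_Mreg hn L hJL hkerL
  obtain ⟨hLX, hXL, hXJ, hJX⟩ := Xstd_facts hn L hLJ hJL hML
  have hpinvL : pinv L = Xstd L := pinv_eq_of hLX hXL hJL hJX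
  -- the symmetrized pseudoinverse S
  have hSJ : ((1/2 : ℝ) • (Xstd L + (Xstd L)ᵀ)) * Jm (Fin n) (Fin n) = 0 := by
    have hXtJ : (Xstd L)ᵀ * Jm (Fin n) (Fin n) = 0 := by
      have h := congrArg Matrix.transpose hJX
      rwa [Matrix.transpose_mul, Jm_transpose, Matrix.transpose_zero] at h
    rw [Matrix.smul_mul, Matrix.add_mul, hXJ, hXtJ, add_zero, smul_zero]
  have hJS : Jm (Fin n) (Fin n) * ((1/2 : ℝ) • (Xstd L + (Xstd L)ᵀ)) = 0 := by
    have hJXt : Jm (Fin n) (Fin n) * (Xstd L)ᵀ = 0 := by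
      have h := congrArg Matrix.transpose hXJ
      rwa [Matrix.transpose_mul, Jm_transpose, Matrix.transpose_zero] at h
    rw [Matrix.mul_smul, Matrix.mul_add, hJX, hJXt, add_zero, smul_zero]
  -- auxiliary identities for the kernel argument
  have hMX : Mreg L * Xstd L = 1 - ((n:ℝ))⁻¹ • Jm (Fin n) (Fin n) := by
    rw [Mreg, Matrix.add_mul, Matrix.smul_mul, hJX, smul_zero, add_zero, hLX]
  have hMJ : Mreg L * Jm (Fin n) (Fin n) = Jm (Fin n) (Fin n) := Mreg_mul_J hn L hLJ
  have hJMt : Jm (Fin n) (Fin n) * (Mreg L)ᵀ = Jm (Fin n) (Fin n) := by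
    have h := congrArg Matrix.transpose hMJ
    rwa [Matrix.transpose_mul, Jm_transpose] at h
  have hMt : (Mreg L)ᵀ = Lᵀ + ((n:ℝ))⁻¹ • Jm (Fin n) (Fin n) := by
    rw [Mreg, Matrix.transpose_add, Matrix.transpose_smul, Jm_transpose]
  have hXtMt : (Xstd L)ᵀ * (Mreg L)ᵀ = 1 - ((n:ℝ))⁻¹ • Jm (Fin n) (Fin n) := by
    have h := congrArg Matrix.transpose hMX
    rwa [Matrix.transpose_mul, Matrix.transpose_sub, Matrix.transpose_one,
      Matrix.transpose_smul, Jm_transpose] at h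
  have hMXM : Mreg L * Xstd L * (Mreg L)ᵀ = Lᵀ := by
    rw [hMX, Matrix.sub_mul, Matrix.one_mul, Matrix.smul_mul, hJMt, hMt]
    abel
  have hMXtM : Mreg L * ((Xstd L)ᵀ * (Mreg L)ᵀ) = L := by
    rw [hXtMt, Matrix.mul_sub, Matrix.mul_one, Matrix.mul_smul, hMJ, Mreg]
    abel
  have hMSM : Mreg L * ((1/2 : ℝ) • (Xstd L + (Xstd L)ᵀ)) * (Mreg L)ᵀ
      = (1/2 : ℝ) • (L + Lᵀ) := by
    rw [Matrix.mul_smul, Matrix.mul_add, Matrix.smul_mul, Matrix.add_mul,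
      Matrix.mul_assoc (Mreg L) ((Xstd L)ᵀ) ((Mreg L)ᵀ), hMXM, hMXtM]
    rw [add_comm]
  -- kernel of S is spanned by the constant vector
  have hkerS : ∀ v, ((1/2 : ℝ) • (Xstd L + (Xstd L)ᵀ)).mulVec v = 0 →
      ∃ c₀ : ℝ, v = fun _ => c₀ := by
    intro v hv
    have hMtdet : IsUnit ((Mreg L)ᵀ).det := by rwa [Matrix.det_transpose]
    set w := ((Mreg L)ᵀ)⁻¹.mulVec v with hw
    have hvw : (Mreg L)ᵀ.mulVec w = v := by
      rw [hw, Matrix.mulVec_mulVec, Matrix.mul_nonsing_inv _ hMtdet, Matrix.one_mulVec]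
    have h0 : ((1/2 : ℝ) • (L + Lᵀ)).mulVec w = 0 := by
      rw [← hMSM, ← Matrix.mulVec_mulVec, ← Matrix.mulVec_mulVec, hvw, hv,
        Matrix.mulVec_zero]
    have hsum : L.mulVec w + Lᵀ.mulVec w = 0 := by
      rw [Matrix.smul_mulVec, Matrix.add_mulVec] at h0
      have h12 : ((1:ℝ)/2) ≠ 0 := by norm_num
      exact (smul_eq_zero.mp h0).resolve_left h12
    have hq : w ⬝ᵥ L.mulVec w = 0 := by
      have e : w ⬝ᵥ (L.mulVec w) + w ⬝ᵥ (Lᵀ.mulVec w) = 0 := by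
        rw [← dotProduct_add, hsum, dotProduct_zero]
      have et : w ⬝ᵥ Lᵀ.mulVec w = w ⬝ᵥ L.mulVec w := by
        calc w ⬝ᵥ Lᵀ.mulVec w = w ⬝ᵥ Matrix.vecMul w L := by rw [Matrix.mulVec_transpose]
          _ = Matrix.vecMul w L ⬝ᵥ w := dotProduct_comm _ _
          _ = w ⬝ᵥ L.mulVec w := (Matrix.dotProduct_mulVec _ _ _).symm
      rw [et] at e
      linarith
    have hLw := quad_zero L hL1 hLt1 hoff w hq
    obtain ⟨c₀, hc₀⟩ := (hker w).1 hLw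
    refine ⟨c₀, ?_⟩
    rw [← hvw, hc₀]
    funext i
    have hcolL : ∑ j, L j i = 0 := by
      have := congrFun hLt1 i
      simpa [Matrix.mulVec, dotProduct, Matrix.transpose_apply] using this
    have hentry : ∀ j, Mreg L j i = L j i + ((n:ℝ))⁻¹ := by
      intro j
      simp [Mreg, Matrix.add_apply, Matrix.smul_apply, Jm]
    calc ((Mreg L)ᵀ.mulVec fun _ => c₀) i = ∑ j, (L j i + ((n:ℝ))⁻¹) * c₀ := by
          simp only [Matrix.mulVec, dotProduct, Matrix.transpose_apply]
          exact Finset.sum_congr rfl fun j _ => by rw [hentry j]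
      _ = (∑ j, L j i * c₀) + ∑ _j : Fin n, ((n:ℝ))⁻¹ * c₀ := by
          simp [add_mul, Finset.sum_add_distrib]
      _ = c₀ := by
          rw [← Finset.sum_mul, hcolL, zero_mul, zero_add, Finset.sum_const,
            Finset.card_univ, Fintype.card_fin, nsmul_eq_mul, ← mul_assoc,
            mul_inv_cancel₀ hn, one_mul]
  -- the undirected Laplacian U = pinv S
  have hMS : IsUnit (Mreg ((1/2 : ℝ) • (Xstd L + (Xstd L)ᵀ))).det :=
    isUnit_Mreg hn _ hJS hkerS
  obtain ⟨hSU, hUS, hUJ, hJU⟩ := Xstd_facts hn ((1/2 : ℝ) • (Xstd L + (Xstd L)ᵀ)) hSJ hJS hMS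
  have hpinvS : pinv ((1/2 : ℝ) • (Xstd L + (Xstd L)ᵀ))
      = Xstd ((1/2 : ℝ) • (Xstd L + (Xstd L)ᵀ)) := pinv_eq_of hSU hUS hJS hJU
  have hundirL : undir L = Xstd ((1/2 : ℝ) • (Xstd L + (Xstd L)ᵀ)) := by
    rw [undir, hpinvL]
    exact hpinvS
  -- Kron reduction facts for (L, X) and (U, S)
  obtain ⟨hKZ, hZK, hJK, hJZ⟩ :=
    kron_facts L (Xstd L) α hm ((n:ℝ))⁻¹ hLJ hJL hXJ hJX hLX hXL h1
  have h2' : IsUnit (subm (Xstd ((1/2 : ℝ) • (Xstd L + (Xstd L)ᵀ))) αᶜ αᶜ).det := by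
    rwa [hundirL] at h2
  obtain ⟨hKZ', hZK', hJK', hJZ'⟩ :=
    kron_facts (Xstd ((1/2 : ℝ) • (Xstd L + (Xstd L)ᵀ))) ((1/2 : ℝ) • (Xstd L + (Xstd L)ᵀ))
      α hm ((n:ℝ))⁻¹ hUJ hJU hSJ hJS hUS hSU h2'
  have hPmrfl : Pm α = 1 - ((α.card : ℝ))⁻¹ • Jm {i // i ∈ α} {i // i ∈ α} := rfl
  rw [hPmrfl] at hKZ hZK hKZ' hZK'
  have hpinvK : pinv (schur L α) = Pm α * subm (Xstd L) α α * Pm α :=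
    pinv_eq_of hKZ hZK hJK hJZ
  have hT : (1/2 : ℝ) • (pinv (schur L α) + (pinv (schur L α))ᵀ)
      = Pm α * subm ((1/2 : ℝ) • (Xstd L + (Xstd L)ᵀ)) α α * Pm α := by
    rw [hpinvK]
    have h1t : (Pm α * subm (Xstd L) α α * Pm α)ᵀ
        = Pm α * subm (Xstd L)ᵀ α α * Pm α := by
      rw [Matrix.transpose_mul, Matrix.transpose_mul, Pm_transpose, subm_transpose,
        ← Matrix.mul_assoc]
    rw [h1t]
    have hsplit : subm ((1/2 : ℝ) • (Xstd L + (Xstd L)ᵀ)) α α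
        = (1/2 : ℝ) • (subm (Xstd L) α α + subm (Xstd L)ᵀ α α) := rfl
    rw [hsplit, Matrix.mul_smul, Matrix.smul_mul, Matrix.mul_add, Matrix.add_mul]
  have hfinal : undir (schur L α) = schur (Xstd ((1/2 : ℝ) • (Xstd L + (Xstd L)ᵀ))) α := by
    rw [undir, hT]
    exact pinv_eq_of hZK' hKZ' hJZ' hJK'
  rw [hundirL, hfinal]
end

section
/- Let Q be a real symmetric positive semidefinite n×n matrix with ker(Q) = span(1), and let α ⊊ [n] with |α| ≥ 2. Then the Schur complement Q/α^c := Q[α,α] − Q[α,α^c]Q[α^c,α^c]^{−1}Q[α^c,α] is well defined (Q[α^c,α^c] is invertible), symmetric positive semidefinite, and has kernel exactly span(1) in ℝ^{|α|}. -/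
/-!
Ordering the indices as `α ⊕ αᶜ` turns `Q` into a block matrix `[[A, B], [Bᵀ, D]]`. A vector
supported on `αᶜ` on which the quadratic form of `Q` vanishes lies in `ker Q = span 1`, so it is
zero because `α` is nonempty: `D` is positive definite. The Schur complement `A - B D⁻¹ Bᵀ` of a
positive definite block of a positive semidefinite matrix is positive semidefinite, and
`(A - B D⁻¹ Bᵀ) v = 0` exactly when `(v, -D⁻¹ Bᵀ v) ∈ ker Q`, i.e. when `v` is constant.
-/

open Matrix

open scoped ComplexOrder

namespace Matrix

variable {ι κ m n R 𝕜 : Type*} [Fintype ι] [Fintype κ] [Fintype m] [Fintype n]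

def KerEqConsts [NonUnitalNonAssocSemiring R] (M : Matrix ι ι R) : Prop :=
  ∀ v : ι → R, M *ᵥ v = 0 ↔ ∃ c : R, v = fun _ => c

theorem KerEqConsts.submatrix_equiv [NonUnitalNonAssocSemiring R] {M : Matrix ι ι R}
    (hM : M.KerEqConsts) (e : κ ≃ ι) : (M.submatrix e e).KerEqConsts := by
  have comp_eq_zero_iff (f : ι → R) : f ∘ e = 0 ↔ f = 0 :=
    e.surjective.injective_comp_right.eq_iff' rfl
  intro v
  rw [submatrix_mulVec_equiv, comp_eq_zero_iff, hM]
  exact exists_congr fun c => e.symm.surjective.injective_comp_right.eq_iff' rfl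

theorem fromBlocks_mulVec_sumElim_eq_zero_iff [NonUnitalNonAssocSemiring R]
    {A : Matrix m m R} {B : Matrix m n R} {C : Matrix n m R} {D : Matrix n n R}
    (v : m → R) (w : n → R) :
    fromBlocks A B C D *ᵥ Sum.elim v w = 0 ↔ A *ᵥ v + B *ᵥ w = 0 ∧ C *ᵥ v + D *ᵥ w = 0 := by
  simp only [fromBlocks_mulVec, Sum.elim_comp_inl, Sum.elim_comp_inr, funext_iff, Pi.zero_apply,
    Sum.forall, Sum.elim_inl, Sum.elim_inr]

theorem schur_mulVec_eq_zero_iff [CommRing R] [DecidableEq n]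
    {A : Matrix m m R} {B : Matrix m n R} {C : Matrix n m R} {D : Matrix n n R}
    (hD : IsUnit D.det) (v : m → R) :
    (A - B * D⁻¹ * C) *ᵥ v = 0 ↔ ∃ w, fromBlocks A B C D *ᵥ Sum.elim v w = 0 := by
  simp only [fromBlocks_mulVec_sumElim_eq_zero_iff]
  constructor
  · intro h
    refine ⟨-(D⁻¹ *ᵥ C *ᵥ v), ?_, ?_⟩
    · rwa [mulVec_neg, mulVec_mulVec, mulVec_mulVec, ← sub_eq_add_neg, ← sub_mulVec]
    · rw [mulVec_neg, mulVec_mulVec, mul_nonsing_inv D hD, one_mulVec, add_neg_cancel]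
  · rintro ⟨w, hA, hC⟩
    have hw : w = -(D⁻¹ *ᵥ C *ᵥ v) := calc
      w = D⁻¹ *ᵥ D *ᵥ w := by rw [mulVec_mulVec, nonsing_inv_mul D hD, one_mulVec]
      _ = -(D⁻¹ *ᵥ C *ᵥ v) := by rw [eq_neg_of_add_eq_zero_right hC, mulVec_neg]
    rwa [hw, mulVec_neg, mulVec_mulVec, mulVec_mulVec, ← sub_eq_add_neg, ← sub_mulVec] at hA

theorem KerEqConsts.schur [CommRing R] [DecidableEq n]
    {A : Matrix m m R} {B : Matrix m n R} {C : Matrix n m R} {D : Matrix n n R}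
    (hD : IsUnit D.det) (hM : (fromBlocks A B C D).KerEqConsts) :
    (A - B * D⁻¹ * C).KerEqConsts := by
  intro v
  rw [schur_mulVec_eq_zero_iff hD]
  constructor
  · rintro ⟨w, hw⟩
    obtain ⟨c, hc⟩ := (hM _).1 hw
    exact ⟨c, funext fun i => congrFun hc (.inl i)⟩
  · rintro ⟨c, rfl⟩
    exact ⟨fun _ => c, (hM _).2 ⟨c, Sum.elim_const_const c⟩⟩

section RCLike

variable [RCLike 𝕜] {A : Matrix m m 𝕜} {B : Matrix m n 𝕜} {C : Matrix n m 𝕜} {D : Matrix n n 𝕜}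

theorem PosSemidef.posDef_of_fromBlocks (hM : (fromBlocks A B C D).PosSemidef)
    (hker : ∀ x, fromBlocks A B C D *ᵥ Sum.elim 0 x = 0 → x = 0) : D.PosDef := by
  have hD : D.PosSemidef := hM.submatrix Sum.inr
  refine .of_dotProduct_mulVec_pos hD.1 fun x hx =>
    (hD.dotProduct_mulVec_nonneg x).lt_of_ne' fun hx0 => hx (hker x ?_)
  rw [← hM.dotProduct_mulVec_zero_iff]
  simpa [fromBlocks_mulVec, Function.star_sumElim, sumElim_dotProduct_sumElim] using hx0

theorem KerEqConsts.posDef_of_fromBlocks [Nonempty m] (hker : (fromBlocks A B C D).KerEqConsts)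
    (hM : (fromBlocks A B C D).PosSemidef) : D.PosDef := by
  refine hM.posDef_of_fromBlocks fun x hx => ?_
  obtain ⟨c, hc⟩ := (hker _).1 hx
  obtain rfl : c = 0 := (congrFun hc (.inl (Classical.arbitrary m))).symm
  exact funext fun j => congrFun hc (.inr j)

theorem PosSemidef.schur_of_fromBlocks [DecidableEq n] (hM : (fromBlocks A B C D).PosSemidef)
    (hD : D.PosDef) : (A - B * D⁻¹ * C).PosSemidef := by
  obtain ⟨-, rfl, -, -⟩ := isHermitian_fromBlocks_iff.mp hM.isHermitian
  have := hD.isUnit.invertible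
  exact (PosDef.fromBlocks₂₂ A B hD).mp hM

end RCLike

end Matrix

def Finset.sumComplEquiv {ι : Type*} [Fintype ι] [DecidableEq ι] (s : Finset ι) : s ⊕ ↥sᶜ ≃ ι :=
  (Equiv.sumCongr (Equiv.refl _) (Equiv.subtypeEquivRight fun _ => Finset.mem_compl)).trans
    (Equiv.sumCompl (· ∈ s))

theorem fromBlocks_subm_eq_submatrix {n : ℕ} (Q : Matrix (Fin n) (Fin n) ℝ) (α : Finset (Fin n)) :
    fromBlocks (subm Q α α) (subm Q α αᶜ) (subm Q αᶜ α) (subm Q αᶜ αᶜ) =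
      Q.submatrix α.sumComplEquiv α.sumComplEquiv := by
  ext (i | i) (j | j) <;> rfl

theorem schur_complement_posSemidef_ker_span_ones_general
    {n : ℕ} (Q : Matrix (Fin n) (Fin n) ℝ)
    (hQ : Q.PosSemidef)
    (hker : ∀ v : Fin n → ℝ, Q.mulVec v = 0 ↔ ∃ c : ℝ, v = fun _ => c)
    (α : Finset (Fin n)) (hα : 2 ≤ α.card) :
    IsUnit (subm Q αᶜ αᶜ).det ∧
    (schur Q α)ᵀ = schur Q α ∧
    (schur Q α).PosSemidef ∧
    (∀ v : {i // i ∈ α} → ℝ,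
      (schur Q α).mulVec v = 0 ↔ ∃ c : ℝ, v = fun _ => c) := by
  have : Nonempty α := (Finset.card_pos.mp (by omega)).to_subtype
  have hMpsd : (fromBlocks (subm Q α α) (subm Q α αᶜ) (subm Q αᶜ α) (subm Q αᶜ αᶜ)).PosSemidef :=
    fromBlocks_subm_eq_submatrix Q α ▸ hQ.submatrix _
  have hMker : (fromBlocks (subm Q α α) (subm Q α αᶜ) (subm Q αᶜ α) (subm Q αᶜ αᶜ)).KerEqConsts :=
    fromBlocks_subm_eq_submatrix Q α ▸ KerEqConsts.submatrix_equiv hker _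
  have hD := hMker.posDef_of_fromBlocks hMpsd
  have hdet : IsUnit (subm Q αᶜ αᶜ).det := (isUnit_iff_isUnit_det _).mp hD.isUnit
  have hS : (schur Q α).PosSemidef := hMpsd.schur_of_fromBlocks hD
  exact ⟨hdet, (conjTranspose_eq_transpose_of_trivial _).symm.trans hS.1, hS, hMker.schur hdet⟩

theorem schur_complement_posSemidef_ker_span_ones
    {n : ℕ} (Q : Matrix (Fin n) (Fin n) ℝ)
    (hQ : Q.PosSemidef)
    (hker : ∀ v : Fin n → ℝ, Q.mulVec v = 0 ↔ ∃ c : ℝ, v = fun _ => c)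
    (α : Finset (Fin n)) (hα : 2 ≤ α.card) (hproper : α ≠ Finset.univ) :
    IsUnit (subm Q αᶜ αᶜ).det ∧
    (schur Q α)ᵀ = schur Q α ∧
    (schur Q α).PosSemidef ∧
    (∀ v : {i // i ∈ α} → ℝ,
      (schur Q α).mulVec v = 0 ↔ ∃ c : ℝ, v = fun _ => c) :=
  schur_complement_posSemidef_ker_span_ones_general Q hQ hker α hα
end

section
/- Let Q be symmetric PSD with ker(Q) = span(1), and let α ⊂ [n], |α| ≥ 2, with reduced Laplacian Q_red := Q/α^c. Then the reduced resistance curvature p_red := p[α] − Q[α,α^c] Q[α^c,α^c]^{−1} p[α^c] satisfies 1ᵀ p_red = 1, i.e., the sum of resistance curvatures remains 1 after Kron reduction. -/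
/-!
Since `Q` is symmetric with `Q 1 = 0`, its columns sum to zero; hence `1ᵀ p = 1` for every `ζ`.
Splitting these column sums along `α` gives `1ᵀ Q[α,αᶜ] = -1ᵀ Q[αᶜ,αᶜ]`, so
`1ᵀ Q[α,αᶜ] Q[αᶜ,αᶜ]⁻¹ = -1ᵀ` and the correction term adds back exactly `1ᵀ p[αᶜ]`.
The block `Q[αᶜ,αᶜ]` is invertible: a vector in its kernel, extended by zero, is a null vector
of the positive semidefinite `Q`, hence constant, hence zero because it vanishes on `α ≠ ∅`.
-/

open Matrix Classical

theorem subm_eq_submatrix {n : ℕ} (A : Matrix (Fin n) (Fin n) ℝ) (α β : Finset (Fin n)) :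
    subm A α β = A.submatrix (↑) (↑) :=
  rfl

namespace Matrix

variable {ι κ R : Type*} [Fintype ι]

theorem vecMul_eq_zero_of_isSymm [CommSemiring R] {Q : Matrix ι ι R} (hQ : Q.IsSymm)
    {v : ι → R} (hv : Q *ᵥ v = 0) : v ᵥ* Q = 0 := by
  rw [← mulVec_transpose, hQ.eq, hv]

theorem sum_mulVec_eq_zero [CommSemiring R] {Q : Matrix ι ι R} (hQ : 1 ᵥ* Q = 0) (v : ι → R) :
    ∑ i, (Q *ᵥ v) i = 0 := by
  rw [← one_dotProduct, dotProduct_mulVec, hQ, zero_dotProduct]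

section Extend

variable [Fintype κ] [CommSemiring R] {e : κ → ι}

theorem dotProduct_extend_zero (he : Function.Injective e) (v : ι → R) (x : κ → R) :
    v ⬝ᵥ Function.extend e x 0 = (v ∘ e) ⬝ᵥ x := by
  refine (Fintype.sum_of_injective e he _ _ (fun i hi => ?_) fun k => ?_).symm
  · rw [Function.extend_apply' _ _ _ hi, Pi.zero_apply, mul_zero]
  · rw [Function.comp_apply, he.extend_apply]

theorem mulVec_extend_zero_comp (he : Function.Injective e) (A : Matrix ι ι R) (x : κ → R) :
    (A *ᵥ Function.extend e x 0) ∘ e = A.submatrix e e *ᵥ x := by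
  ext k
  exact dotProduct_extend_zero he _ x

theorem extend_zero_dotProduct_mulVec (he : Function.Injective e) (A : Matrix ι ι R)
    (x : κ → R) :
    Function.extend e x 0 ⬝ᵥ A *ᵥ Function.extend e x 0 = x ⬝ᵥ A.submatrix e e *ᵥ x := by
  rw [dotProduct_comm, dotProduct_extend_zero he, mulVec_extend_zero_comp he, dotProduct_comm]

end Extend

theorem PosSemidef.isUnit_submatrix_of_ker_le_const [Fintype κ] [DecidableEq κ]
    {Q : Matrix ι ι ℝ} (hQ : Q.PosSemidef) (hker : ∀ v, Q *ᵥ v = 0 → ∃ c : ℝ, v = fun _ => c)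
    {e : κ → ι} (he : Function.Injective e) {i₀ : ι} (hi₀ : i₀ ∉ Set.range e) :
    IsUnit (Q.submatrix e e) := by
  rw [← mulVec_injective_iff_isUnit, ← coe_mulVecLin, ← LinearMap.ker_eq_bot,
    LinearMap.ker_eq_bot']
  intro x hx
  rw [coe_mulVecLin] at hx
  have hker_extend : Q *ᵥ Function.extend e x 0 = 0 := by
    rw [← hQ.dotProduct_mulVec_zero_iff, star_trivial, extend_zero_dotProduct_mulVec he, hx,
      dotProduct_zero]
  obtain ⟨c, hc⟩ := hker _ hker_extend
  have hc0 : c = 0 := by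
    simpa [Function.extend_apply' _ _ _ hi₀] using (congrFun hc i₀).symm
  ext k
  simpa [he.extend_apply, hc0] using congrFun hc (e k)

section KronReduction

variable [CommRing R] [DecidableEq ι] {Q : Matrix ι ι R} (s : Finset ι)

theorem one_vecMul_submatrix_eq_neg_compl (hQ : 1 ᵥ* Q = 0) (f : κ → ι) :
    1 ᵥ* Q.submatrix ((↑) : s → ι) f = -(1 ᵥ* Q.submatrix ((↑) : ↥sᶜ → ι) f) := by
  ext j
  have hcol := congrFun hQ (f j)
  simp only [vecMul, one_dotProduct, Pi.zero_apply] at hcol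
  simp only [vecMul, one_dotProduct, submatrix_apply, Pi.neg_apply]
  rw [eq_neg_iff_add_eq_zero, Finset.sum_coe_sort s (fun i => Q i (f j)),
    Finset.sum_coe_sort sᶜ (fun i => Q i (f j)), Finset.sum_add_sum_compl, hcol]

theorem one_vecMul_mul_inv_submatrix_compl (hQ : 1 ᵥ* Q = 0)
    (hS : IsUnit (Q.submatrix (↑) (↑) : Matrix ↥sᶜ ↥sᶜ R).det) :
    1 ᵥ* ((Q.submatrix (↑) (↑) : Matrix s ↥sᶜ R) *
      (Q.submatrix (↑) (↑) : Matrix ↥sᶜ ↥sᶜ R)⁻¹) = -1 := by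
  rw [← vecMul_vecMul, one_vecMul_submatrix_eq_neg_compl s hQ, neg_vecMul, vecMul_vecMul,
    mul_nonsing_inv _ hS, vecMul_one]

theorem sum_sub_mul_inv_submatrix_compl_mulVec (hQ : 1 ᵥ* Q = 0)
    (hS : IsUnit (Q.submatrix (↑) (↑) : Matrix ↥sᶜ ↥sᶜ R).det) (p : ι → R) :
    ∑ i, ((fun i : s => p i) - ((Q.submatrix (↑) (↑) : Matrix s ↥sᶜ R) *
      (Q.submatrix (↑) (↑) : Matrix ↥sᶜ ↥sᶜ R)⁻¹) *ᵥ fun j : ↥sᶜ => p j) i = ∑ i, p i := by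
  simp only [Pi.sub_apply, Finset.sum_sub_distrib]
  rw [← one_dotProduct (_ *ᵥ _), dotProduct_mulVec,
    one_vecMul_mul_inv_submatrix_compl s hQ hS, neg_dotProduct, one_dotProduct, sub_neg_eq_add,
    Finset.sum_coe_sort s, Finset.sum_coe_sort sᶜ, Finset.sum_add_sum_compl]

end KronReduction

end Matrix

theorem reduced_resistance_curvature_sums_to_one_general
    {n : ℕ} (hn : 2 ≤ n) (Q : Matrix (Fin n) (Fin n) ℝ)
    (hQ : Q.PosSemidef)
    (hker : ∀ v : Fin n → ℝ, Q.mulVec v = 0 ↔ ∃ c : ℝ, v = fun _ => c)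
    (ζ : Fin n → ℝ)
    (p : Fin n → ℝ)
    (hp : p = (1 / 2 : ℝ) • Q.mulVec ζ + (1 / (n : ℝ)) • ((fun _ => 1) : Fin n → ℝ))
    (α : Finset (Fin n)) (hα : 2 ≤ α.card)
    (pred : {i // i ∈ α} → ℝ)
    (hpred : pred = (fun i => p i.1) -
      (subm Q α αᶜ * (subm Q αᶜ αᶜ)⁻¹).mulVec (fun i => p i.1)) :
    ∑ i, pred i = 1 := by
  have hcol : 1 ᵥ* Q = 0 :=
    vecMul_eq_zero_of_isSymm (isHermitian_iff_isSymm.mp hQ.1) ((hker 1).mpr ⟨1, rfl⟩)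
  obtain ⟨i₀, hi₀⟩ : α.Nonempty := Finset.card_pos.mp (by omega)
  have hi₀ : i₀ ∉ Set.range ((↑) : ↥αᶜ → Fin n) := by simpa using hi₀
  have hS : IsUnit (subm Q αᶜ αᶜ).det :=
    (isUnit_iff_isUnit_det _).mp <| hQ.isUnit_submatrix_of_ker_le_const (fun v => (hker v).mp)
      Subtype.val_injective hi₀
  rw [hpred, subm_eq_submatrix, subm_eq_submatrix,
    sum_sub_mul_inv_submatrix_compl_mulVec α hcol hS, hp]
  have hn0 : (n : ℝ) ≠ 0 := Nat.cast_ne_zero.mpr (by omega)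
  simp [Finset.sum_add_distrib, ← Finset.mul_sum, sum_mulVec_eq_zero hcol, hn0]

theorem reduced_resistance_curvature_sums_to_one
    {n : ℕ} (hn : 2 ≤ n) (Q : Matrix (Fin n) (Fin n) ℝ)
    (hQ : Q.PosSemidef)
    (hker : ∀ v : Fin n → ℝ, Q.mulVec v = 0 ↔ ∃ c : ℝ, v = fun _ => c)
    (ζ : Fin n → ℝ) (hζ : ζ = fun i => pinv Q i i)
    (p : Fin n → ℝ)
    (hp : p = (1 / 2 : ℝ) • Q.mulVec ζ + (1 / (n : ℝ)) • ((fun _ => 1) : Fin n → ℝ))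
    (α : Finset (Fin n)) (hα : 2 ≤ α.card)
    (pred : {i // i ∈ α} → ℝ)
    (hpred : pred = (fun i => p i.1) -
      (subm Q α αᶜ * (subm Q αᶜ αᶜ)⁻¹).mulVec (fun i => p i.1)) :
    ∑ i, pred i = 1 :=
  reduced_resistance_curvature_sums_to_one_general hn Q hQ hker ζ p hp α hα pred hpred
end

section
/- (Strict negative type ⟸ generalized resistance metric) Let Q be a real symmetric PSD n×n matrix with ker(Q) = span(1), and let Ω := 1ζᵀ + ζ1ᵀ − 2Q† with ζ := diagvec(Q†). Then Ω is a strict negative type matrix: for every f ∈ ℝⁿ with 1ᵀf = 0 and f ≠ 0, fᵀΩf < 0. -/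
open Matrix Classical

namespace Matrix

def IsPenroseInverse {m k : Type*} [Fintype m] [Fintype k]
    (A : Matrix m k ℝ) (X : Matrix k m ℝ) : Prop :=
  A * X * A = A ∧ X * A * X = X ∧ (A * X)ᵀ = A * X ∧ (X * A)ᵀ = X * A

section Rectangular

variable {m k : Type*} [Fintype m] [Fintype k] {A : Matrix m k ℝ} {X Y : Matrix k m ℝ}

theorem IsPenroseInverse.unique (hX : A.IsPenroseInverse X) (hY : A.IsPenroseInverse Y) :
    X = Y := by
  obtain ⟨hX1, hX2, hX3, hX4⟩ := hX
  obtain ⟨hY1, hY2, hY3, hY4⟩ := hY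
  have hAX : A * X = A * Y :=
    calc A * X = (A * X)ᵀ := hX3.symm
      _ = ((A * Y) * (A * X))ᵀ := by rw [← Matrix.mul_assoc, hY1]
      _ = (A * X) * (A * Y) := by rw [transpose_mul, hX3, hY3]
      _ = A * Y := by rw [← Matrix.mul_assoc, hX1]
  have hXA : X * A = Y * A :=
    calc X * A = (X * A)ᵀ := hX4.symm
      _ = ((X * A) * (Y * A))ᵀ := by rw [Matrix.mul_assoc, ← Matrix.mul_assoc A, hY1]
      _ = (Y * A) * (X * A) := by rw [transpose_mul, hX4, hY4]
      _ = Y * A := by rw [Matrix.mul_assoc, ← Matrix.mul_assoc A, hX1]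
  calc X = X * A * X := hX2.symm
    _ = Y * A * Y := by rw [Matrix.mul_assoc, hAX, ← Matrix.mul_assoc, hXA]
    _ = Y := hY2

theorem isPenroseInverse_pinv (h : ∃ X, A.IsPenroseInverse X) : A.IsPenroseInverse (pinv A) := by
  unfold pinv
  split_ifs with h'
  · exact h'.choose_spec
  · exact absurd h h'

theorem IsPenroseInverse.pinv_eq (hX : A.IsPenroseInverse X) : pinv A = X :=
  (isPenroseInverse_pinv ⟨X, hX⟩).unique hX

end Rectangular

section Square

variable {n : Type*} [Fintype n] {A X : Matrix n n ℝ}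

theorem IsPenroseInverse.mulVec_eq_zero_iff (h : A.IsPenroseInverse X) (hc : X * A = A * X)
    {v : n → ℝ} : X *ᵥ v = 0 ↔ A *ᵥ v = 0 := by
  obtain ⟨h1, h2, -, -⟩ := h
  constructor <;> intro hv
  · rw [← h1, Matrix.mul_assoc, hc, ← Matrix.mul_assoc, ← mulVec_mulVec, hv, mulVec_zero]
  · rw [← h2, Matrix.mul_assoc, ← hc, ← Matrix.mul_assoc, ← mulVec_mulVec, hv, mulVec_zero]

theorem IsPenroseInverse.dotProduct_mulVec_self (h : A.IsPenroseInverse X) (hX : Xᵀ = X)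
    (v : n → ℝ) : v ⬝ᵥ X *ᵥ v = X *ᵥ v ⬝ᵥ A *ᵥ (X *ᵥ v) := by
  conv_lhs => rw [← h.2.1]
  rw [← mulVec_mulVec, ← mulVec_mulVec, dotProduct_mulVec, ← mulVec_transpose, hX]

variable [DecidableEq n]

theorem IsHermitian.isPenroseInverse_cfc_inv (hA : A.IsHermitian) :
    A.IsPenroseInverse (cfc (·⁻¹ : ℝ → ℝ) A) := by
  have hid : cfc (fun x : ℝ => x) A = A := cfc_id' ℝ A hA.isSelfAdjoint
  have hsymm (f : ℝ → ℝ) : (cfc f A)ᵀ = cfc f A :=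
    (isHermitian_iff_isSymm.mp (cfc_predicate f A)).eq
  have hsymm_mul (f g : ℝ → ℝ) : (cfc f A * cfc g A)ᵀ = cfc f A * cfc g A := by
    rw [transpose_mul, hsymm, hsymm, cfc_commute_cfc]
  have hcont (f : ℝ → ℝ) : ContinuousOn f (spectrum ℝ A) :=
    A.finite_real_spectrum.continuousOn f
  have hmul3 (f g h : ℝ → ℝ) :
      cfc f A * cfc g A * cfc h A = cfc (fun x => f x * g x * h x) A := by
    rw [← cfc_mul f g A (hcont f) (hcont g), ← cfc_mul _ h A (hcont _) (hcont h)]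
  refine ⟨?_, ?_, ?_, ?_⟩
  · simpa only [hid, mul_inv_mul_cancel] using
      hmul3 (fun x => x) (·⁻¹) (fun x => x)
  · have hinv (x : ℝ) : x⁻¹ * x * x⁻¹ = x⁻¹ := by simpa using mul_inv_mul_cancel x⁻¹
    simpa only [hid, hinv] using hmul3 (·⁻¹) (fun x => x) (·⁻¹)
  · simpa only [hid] using hsymm_mul (fun x => x) (·⁻¹)
  · simpa only [hid] using hsymm_mul (·⁻¹) (fun x => x)

theorem IsHermitian.isPenroseInverse_pinv (hA : A.IsHermitian) : A.IsPenroseInverse (pinv A) :=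
  hA.isPenroseInverse_cfc_inv.pinv_eq ▸ hA.isPenroseInverse_cfc_inv

theorem IsHermitian.transpose_pinv (hA : A.IsHermitian) : (pinv A)ᵀ = pinv A := by
  rw [hA.isPenroseInverse_cfc_inv.pinv_eq]
  exact (isHermitian_iff_isSymm.mp (cfc_predicate (·⁻¹ : ℝ → ℝ) A)).eq

theorem IsHermitian.pinv_mul_comm (hA : A.IsHermitian) : pinv A * A = A * pinv A := by
  rw [hA.isPenroseInverse_cfc_inv.pinv_eq]
  simpa only [cfc_id' ℝ A hA.isSelfAdjoint] using
    (cfc_commute_cfc (·⁻¹ : ℝ → ℝ) (fun x => x) A).eq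

theorem PosSemidef.dotProduct_pinv_mulVec_pos_s16 (hA : A.PosSemidef) {v : n → ℝ}
    (hv : A *ᵥ v ≠ 0) : 0 < v ⬝ᵥ pinv A *ᵥ v := by
  have hP := hA.isHermitian.isPenroseInverse_pinv
  rw [hP.dotProduct_mulVec_self hA.isHermitian.transpose_pinv]
  refine (hA.dotProduct_mulVec_nonneg _).lt_of_ne' fun h0 => hv ?_
  have hAX : A *ᵥ (pinv A *ᵥ v) = 0 := (hA.dotProduct_mulVec_zero_iff _).mp h0
  rw [← hP.mulVec_eq_zero_iff hA.isHermitian.pinv_mul_comm, ← hP.2.1, ← mulVec_mulVec,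
    ← mulVec_mulVec, hAX, mulVec_zero]

end Square

theorem dotProduct_resistance_mulVec_of_sum_eq_zero {ι : Type*} [Fintype ι] (ζ f : ι → ℝ)
    (X : Matrix ι ι ℝ) (hf : ∑ i, f i = 0) :
    f ⬝ᵥ (Matrix.of (fun _ j => ζ j) + Matrix.of (fun i _ => ζ i) - 2 • X) *ᵥ f
      = -2 * (f ⬝ᵥ X *ᵥ f) := by
  have hrow : f ⬝ᵥ Matrix.of (fun _ j => ζ j) *ᵥ f = 0 := by
    simp [dotProduct, mulVec, ← Finset.sum_mul, hf]
  have hcol : f ⬝ᵥ Matrix.of (fun i _ => ζ i) *ᵥ f = 0 := by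
    simp [dotProduct, mulVec, ← Finset.mul_sum, hf]
  rw [sub_mulVec, add_mulVec, dotProduct_sub, dotProduct_add, hrow, hcol, smul_mulVec,
    dotProduct_smul]
  simp

end Matrix

theorem resistance_matrix_strict_negative_type_general
    {n : ℕ} (Q : Matrix (Fin n) (Fin n) ℝ)
    (hQ : Q.PosSemidef)
    (hker : ∀ v : Fin n → ℝ, Q.mulVec v = 0 ↔ ∃ c : ℝ, v = fun _ => c)
    (ζ : Fin n → ℝ)
    (Ω : Matrix (Fin n) (Fin n) ℝ)
    (hΩ : Ω = Matrix.of (fun _ j => ζ j) + Matrix.of (fun i _ => ζ i) - 2 • pinv Q) :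
    ∀ f : Fin n → ℝ, (∑ i, f i) = 0 → f ≠ 0 → f ⬝ᵥ Ω.mulVec f < 0 := by
  intro f hf hf0
  have hQf : Q *ᵥ f ≠ 0 := by
    intro hQf
    obtain ⟨c, rfl⟩ := (hker f).mp hQf
    exact hf0 (funext fun i => by simpa [i.pos.ne'] using hf)
  rw [hΩ, dotProduct_resistance_mulVec_of_sum_eq_zero ζ f _ hf]
  linarith [hQ.dotProduct_pinv_mulVec_pos_s16 hQf]

theorem resistance_matrix_strict_negative_type
    {n : ℕ} (Q : Matrix (Fin n) (Fin n) ℝ)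
    (hQ : Q.PosSemidef)
    (hker : ∀ v : Fin n → ℝ, Q.mulVec v = 0 ↔ ∃ c : ℝ, v = fun _ => c)
    (ζ : Fin n → ℝ) (hζ : ζ = fun i => pinv Q i i)
    (Ω : Matrix (Fin n) (Fin n) ℝ)
    (hΩ : Ω = Matrix.of (fun _ j => ζ j) + Matrix.of (fun i _ => ζ i) - 2 • pinv Q) :
    ∀ f : Fin n → ℝ, (∑ i, f i) = 0 → f ≠ 0 → f ⬝ᵥ Ω.mulVec f < 0 :=
  resistance_matrix_strict_negative_type_general Q hQ hker ζ Ω hΩ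
end
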